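/- arXiv:1702.06062 — 6 statements merged into one kernel-verified Lean document; each statement's English description precedes it below -/
import Mathlib

section
/- For any MHR distribution F (one whose hazard rate f(v)/(1-F(v)) is nondecreasing) with mean μ and monopoly revenue R(q*) = max_q v(q)·q, it holds that μ ≤ e·R(q*). -/
/-!
At a monopoly price `v⋆ ∈ (0, v̄)` the first-order condition `v⋆ f(v⋆) = 1 - F(v⋆)` says that the
hazard rate equals `1 / v⋆` there. By MHR the hazard rate is at most `1 / v⋆` before `v⋆` and at
least `1 / v⋆` after it, so `(1 - F t) e^{t / v⋆}` peaks at `t = v⋆`, i.e.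
`1 - F t ≤ (1 - F v⋆) e^{1 - t / v⋆}`. Integrating this bound, `μ = ∫ (1 - F) ≤ e v⋆ (1 - F v⋆)`.
-/

open Set intervalIntegral Real Filter Topology
open MeasureTheory (volume)

section Primitive

variable {f F : ℝ → ℝ} {a b : ℝ}

theorem hasDerivAt_of_eqOn_primitive (hf : ContinuousOn f (Icc a b))
    (hF : ∀ t ∈ Icc a b, F t = ∫ s in a..t, f s) {t : ℝ} (ht : t ∈ Ioo a b) :
    HasDerivAt F (f t) t := by
  have hnhds : Icc a b ∈ 𝓝 t := Icc_mem_nhds ht.1 ht.2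
  have hprim : HasDerivAt (fun u => ∫ s in a..u, f s) (f t) t :=
    integral_hasDerivAt_right
      ((hf.mono (Icc_subset_Icc_right ht.2.le)).intervalIntegrable_of_Icc ht.1.le)
      ((hf.mono Ioo_subset_Icc_self).stronglyMeasurableAtFilter isOpen_Ioo t ht)
      (hf.continuousAt hnhds)
  exact hprim.congr_of_eventuallyEq (eventually_of_mem hnhds hF)

theorem continuousOn_of_eqOn_primitive (hab : a ≤ b) (hf : ContinuousOn f (Icc a b))
    (hF : ∀ t ∈ Icc a b, F t = ∫ s in a..t, f s) : ContinuousOn F (Icc a b) :=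
  ((continuousOn_primitive_interval' (hf.intervalIntegrable_of_Icc hab) left_mem_uIcc).mono
    Icc_subset_uIcc).congr hF

theorem strictMonoOn_of_eqOn_primitive (hab : a ≤ b) (hf : ContinuousOn f (Icc a b))
    (hf_pos : ∀ t ∈ Icc a b, 0 < f t) (hF : ∀ t ∈ Icc a b, F t = ∫ s in a..t, f s) :
    StrictMonoOn F (Icc a b) := by
  refine strictMonoOn_of_deriv_pos (convex_Icc a b) (continuousOn_of_eqOn_primitive hab hf hF)
    fun t ht => ?_
  rw [interior_Icc] at ht
  rw [(hasDerivAt_of_eqOn_primitive hf hF ht).deriv]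
  exact hf_pos t (Ioo_subset_Icc_self ht)

end Primitive

section Survival

variable {f F S g : ℝ → ℝ} {a b r v : ℝ}

theorem integral_mul_eq_integral_one_sub (hb : 0 ≤ b) (hF : ContinuousOn F (Icc 0 b))
    (hderiv : ∀ t ∈ Ioo 0 b, HasDerivAt F (f t) t) (hf : IntervalIntegrable f volume 0 b)
    (hFb : F b = 1) : ∫ t in 0..b, t * f t = ∫ t in 0..b, (1 - F t) := by
  have hFint : IntervalIntegrable (fun t => F t - 1) volume 0 b :=
    ((hF.sub continuousOn_const).intervalIntegrable_of_Icc hb)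
  have htf : IntervalIntegrable (fun t => t * f t) volume 0 b :=
    hf.continuousOn_mul continuousOn_id
  have hparts : ∫ t in 0..b, ((F t - 1) + t * f t) = 0 := by
    rw [integral_eq_sub_of_hasDerivAt_of_le hb (continuousOn_id.mul (hF.sub continuousOn_const))
      (fun t ht => ((hasDerivAt_id' t).mul ((hderiv t ht).sub_const 1)).congr_deriv (by ring))
      (hFint.add htf)]
    simp [hFb]
  have hneg : ∫ t in 0..b, (1 - F t) = -∫ t in 0..b, (F t - 1) := by
    rw [← integral_neg]; simp only [neg_sub]
  rw [integral_add hFint htf] at hparts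
  linarith

theorem mul_eq_one_sub_of_isLocalMax (hF : HasDerivAt F (f v) v)
    (hmax : IsLocalMax (fun w => w * (1 - F w)) v) : v * f v = 1 - F v := by
  have := hmax.hasDerivAt_eq_zero ((hasDerivAt_id v).mul (hF.const_sub 1))
  simp only [id_eq, one_mul] at this
  linarith

theorem hasDerivAt_mul_exp {s' t : ℝ} (hS : HasDerivAt S s' t) :
    HasDerivAt (fun u => S u * exp (r * u)) (exp (r * t) * (r * S t + s')) t :=
  (hS.mul ((hasDerivAt_id' t).const_mul r).exp).congr_deriv (by ring)

theorem isMaxOn_mul_exp_of_deriv_cross (hS : ContinuousOn S (Icc a b))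
    (hderiv : ∀ t ∈ Ioo a b, HasDerivAt S (-g t) t) (hv : v ∈ Icc a b)
    (hbelow : ∀ t ∈ Ioo a v, g t ≤ r * S t) (habove : ∀ t ∈ Ioo v b, r * S t ≤ g t) :
    IsMaxOn (fun t => S t * exp (r * t)) (Icc a b) v := by
  have hcont : ContinuousOn (fun t => S t * exp (r * t)) (Icc a b) :=
    hS.mul (by fun_prop)
  have hdiff : ∀ t ∈ Ioo a b, HasDerivAt (fun u => S u * exp (r * u))
      (exp (r * t) * (r * S t + -g t)) t := fun t ht => hasDerivAt_mul_exp (hderiv t ht)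
  have hmono : MonotoneOn (fun t => S t * exp (r * t)) (Icc a v) := by
    refine monotoneOn_of_deriv_nonneg (convex_Icc a v) (hcont.mono (Icc_subset_Icc_right hv.2))
      (fun t ht => ?_) fun t ht => ?_ <;> rw [interior_Icc] at ht
    · exact (hdiff t ⟨ht.1, ht.2.trans_le hv.2⟩).differentiableAt.differentiableWithinAt
    · rw [(hdiff t ⟨ht.1, ht.2.trans_le hv.2⟩).deriv]
      exact mul_nonneg (exp_pos _).le (by linarith [hbelow t ht])
  have hanti : AntitoneOn (fun t => S t * exp (r * t)) (Icc v b) := by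
    refine antitoneOn_of_deriv_nonpos (convex_Icc v b) (hcont.mono (Icc_subset_Icc_left hv.1))
      (fun t ht => ?_) fun t ht => ?_ <;> rw [interior_Icc] at ht
    · exact (hdiff t ⟨hv.1.trans_lt ht.1, ht.2⟩).differentiableAt.differentiableWithinAt
    · rw [(hdiff t ⟨hv.1.trans_lt ht.1, ht.2⟩).deriv]
      exact mul_nonpos_of_nonneg_of_nonpos (exp_pos _).le (by linarith [habove t ht])
  intro t ht
  rcases le_total t v with htv | hvt
  · exact hmono ⟨ht.1, htv⟩ ⟨hv.1, le_rfl⟩ htv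
  · exact hanti ⟨le_rfl, hv.2⟩ ⟨hvt, ht.2⟩ hvt

theorem integral_exp_neg_mul (r b : ℝ) (hr : r ≠ 0) :
    ∫ t in 0..b, exp (-(r * t)) = (1 - exp (-(r * b))) / r := by
  have hderiv : ∀ t, HasDerivAt (fun u => -exp (-(r * u)) / r) (exp (-(r * t))) t := fun t =>
    (((hasDerivAt_id' t).const_mul r).fun_neg.exp.fun_neg.div_const r).congr_deriv (by field_simp)
  rw [integral_eq_sub_of_hasDerivAt (fun t _ => hderiv t)
    (Continuous.intervalIntegrable (by fun_prop) _ _)]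
  simp only [mul_zero, neg_zero, exp_zero]
  ring

theorem integral_le_div_of_mul_exp_le {M : ℝ} (hb : 0 ≤ b) (hr : 0 < r) (hM : 0 ≤ M)
    (hS : ContinuousOn S (Icc 0 b)) (hbound : ∀ t ∈ Icc 0 b, S t * exp (r * t) ≤ M) :
    ∫ t in 0..b, S t ≤ M / r := by
  have hdecay : ∀ t ∈ Icc 0 b, S t ≤ M * exp (-(r * t)) := fun t ht => by
    rw [exp_neg, ← div_eq_mul_inv, le_div_iff₀ (exp_pos _)]
    exact hbound t ht
  calc ∫ t in 0..b, S t ≤ ∫ t in 0..b, M * exp (-(r * t)) :=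
        integral_mono_on hb (hS.intervalIntegrable_of_Icc hb)
          (Continuous.intervalIntegrable (by fun_prop) _ _) hdecay
    _ = M * ((1 - exp (-(r * b))) / r) := by
        rw [integral_const_mul, integral_exp_neg_mul r b hr.ne']
    _ ≤ M / r := by
        rw [← mul_div_assoc]
        gcongr
        exact mul_le_of_le_one_right hM (by linarith [exp_pos (-(r * b))])

end Survival

/-- For any MHR distribution (with continuous positive density `f` on `[0, v̄]`,
CDF `F`, and nondecreasing hazard rate `f/(1-F)`), the mean `μ` satisfies
`μ ≤ e * R(q*)`, where `R(q*) = max_v v (1 - F v)` is the monopoly revenue. -/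
theorem stmt_6 (vbar : ℝ) (hvbar : 0 < vbar)
    (f F : ℝ → ℝ)
    (hf_cont : ContinuousOn f (Icc 0 vbar))
    (hf_pos : ∀ t ∈ Icc 0 vbar, 0 < f t)
    (hF : ∀ t ∈ Icc 0 vbar, F t = ∫ s in (0:ℝ)..t, f s)
    (hF1 : F vbar = 1)
    (hMHR : ∀ s t, s ∈ Icc 0 vbar → t ∈ Icc 0 vbar → s ≤ t → t < vbar →
      f s / (1 - F s) ≤ f t / (1 - F t))
    (mean : ℝ) (hmean : mean = ∫ t in (0:ℝ)..vbar, t * f t)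
    (vstar : ℝ) (hvs : vstar ∈ Icc 0 vbar)
    (hmax : ∀ w ∈ Icc (0:ℝ) vbar, w * (1 - F w) ≤ vstar * (1 - F vstar)) :
    mean ≤ Real.exp 1 * (vstar * (1 - F vstar)) := by
  have hderiv := fun t (ht : t ∈ Ioo 0 vbar) => hasDerivAt_of_eqOn_primitive hf_cont hF ht
  have hcont := continuousOn_of_eqOn_primitive hvbar.le hf_cont hF
  have hS_pos : ∀ t ∈ Ico 0 vbar, 0 < 1 - F t := fun t ht => by
    linarith [strictMonoOn_of_eqOn_primitive hvbar.le hf_cont hf_pos hF (Ico_subset_Icc_self ht)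
      (right_mem_Icc.2 hvbar.le) ht.2]
  have hv : vstar ∈ Ioo 0 vbar := by
    have hR : 0 < vstar * (1 - F vstar) :=
      (mul_pos (half_pos hvbar) (hS_pos _ ⟨by linarith, by linarith⟩)).trans_le
        (hmax _ ⟨by linarith, by linarith⟩)
    refine ⟨hvs.1.lt_of_ne ?_, hvs.2.lt_of_ne ?_⟩ <;> rintro rfl <;> simp [hF1] at hR
  have hfoc : vstar * f vstar = 1 - F vstar := mul_eq_one_sub_of_isLocalMax (hderiv _ hv)
    (IsMaxOn.isLocalMax (s := Icc 0 vbar) hmax (Icc_mem_nhds hv.1 hv.2))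
  have hhaz : f vstar / (1 - F vstar) = vstar⁻¹ := by
    rw [← hfoc]; field_simp [hv.1.ne', (hf_pos _ hvs).ne']
  have hpeak := isMaxOn_mul_exp_of_deriv_cross (S := fun t => 1 - F t) (r := vstar⁻¹)
    (continuousOn_const.sub hcont) (fun t ht => (hderiv t ht).const_sub 1) hvs
    (fun t ht => (div_le_iff₀ (hS_pos t ⟨ht.1.le, ht.2.trans hv.2⟩)).1 <|
      (hMHR t vstar ⟨ht.1.le, ht.2.le.trans hvs.2⟩ hvs ht.2.le hv.2).trans_eq hhaz)
    (fun t ht => (le_div_iff₀ (hS_pos t ⟨hv.1.le.trans ht.1.le, ht.2⟩)).1 <|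
      hhaz.symm.trans_le (hMHR vstar t hvs ⟨hv.1.le.trans ht.1.le, ht.2.le⟩ ht.1.le ht.2))
  calc mean = ∫ t in 0..vbar, (1 - F t) := hmean.trans <|
        integral_mul_eq_integral_one_sub hvbar.le hcont hderiv
          (hf_cont.intervalIntegrable_of_Icc hvbar.le) hF1
    _ ≤ (1 - F vstar) * exp (vstar⁻¹ * vstar) / vstar⁻¹ :=
        integral_le_div_of_mul_exp_le hvbar.le (inv_pos.2 hv.1)
          (mul_nonneg (hS_pos _ (Ioo_subset_Ico_self hv)).le (exp_pos _).le)
          (continuousOn_const.sub hcont) hpeak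
    _ = exp 1 * (vstar * (1 - F vstar)) := by
        rw [inv_mul_cancel₀ hv.1.ne', div_inv_eq_mul]; ring
end

section
/- Consider n bidders with i.i.d. values from distribution F with inverse quantile function v(·), and payment functions c(p)=p^d with d ≥ 1. The uniform-allocation mechanism with quantile reserve q̂ — allocating 1/Z to each of the Z bidders whose quantile is at most q̂ and charging each winner (v(q̂)/Z)^{1/d} — has expected revenue APX(q̂) ≥ n·(v(q̂)/(1+(n-1)q̂))^{1/d}·q̂. -/
/-!
Fix a bidder `i` and write `e = 1/d ∈ (0, 1]`. On the event that `i` wins, its payment is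
`v(q̂)^e · Z^(-e)`, and `x ↦ x^(-e)` is convex, so it lies above its tangent line at
`a = 1 + (n-1) q̂`. The tangent line is affine in `Z`, and by independence of the quantiles
`E[1{i wins}] = q̂` and `E[1{i wins} · Z] = q̂ (1 + (n-1) q̂) = a q̂`; so integrating the tangent
line over `{i wins}` gives exactly `q̂ · a^(-e)` (Jensen's inequality on `{i wins}`).
-/

open MeasureTheory ProbabilityTheory Set

lemma one_sub_mul_sub_one_le_rpow_neg {e t : ℝ} (he0 : 0 ≤ e) (he1 : e ≤ 1) (ht : 0 < t) :
    1 - e * (t - 1) ≤ t ^ (-e) := by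
  have hte : 0 < t ^ e := Real.rpow_pos_of_pos ht e
  have hbern : t ^ e ≤ 1 + e * (t - 1) := by
    simpa using rpow_one_add_le_one_add_mul_self (s := t - 1) (by linarith) he0 he1
  rw [Real.rpow_neg ht.le, ← one_div, le_div_iff₀ hte]
  rcases le_total (1 - e * (t - 1)) 0 with h | h
  · nlinarith
  · nlinarith [mul_le_mul_of_nonneg_left hbern h, sq_nonneg (e * (t - 1))]

lemma rpow_neg_tangent_le {e a x : ℝ} (he0 : 0 ≤ e) (he1 : e ≤ 1) (ha : 0 < a) (hx : 0 < x) :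
    a ^ (-e) * (1 - e * (x / a - 1)) ≤ x ^ (-e) := by
  calc a ^ (-e) * (1 - e * (x / a - 1)) ≤ a ^ (-e) * (x / a) ^ (-e) :=
        mul_le_mul_of_nonneg_left (one_sub_mul_sub_one_le_rpow_neg he0 he1 (by positivity))
          (by positivity)
    _ = x ^ (-e) := by
        rw [← Real.mul_rpow ha.le (by positivity), mul_div_cancel₀ _ ha.ne']

lemma mul_integral_le_integral_mul_rpow_neg {Ω : Type*} [MeasurableSpace Ω] {μ : Measure Ω}
    {W Z : Ω → ℝ} {e a : ℝ} (he0 : 0 ≤ e) (he1 : e ≤ 1) (ha : 0 < a)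
    (hW : 0 ≤ W) (hZ : ∀ ω, W ω ≠ 0 → 0 < Z ω)
    (hWi : Integrable W μ) (hWZi : Integrable (fun ω => W ω * Z ω) μ)
    (hi : Integrable (fun ω => W ω * Z ω ^ (-e)) μ)
    (hWZ : ∫ ω, W ω * Z ω ∂μ = a * ∫ ω, W ω ∂μ) :
    (∫ ω, W ω ∂μ) * a ^ (-e) ≤ ∫ ω, W ω * Z ω ^ (-e) ∂μ := by
  have htangent : ∀ ω,
      a ^ (-e) * ((1 + e) * W ω - e / a * (W ω * Z ω)) ≤ W ω * Z ω ^ (-e) := by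
    intro ω
    by_cases hWω : W ω = 0
    · simp [hWω]
    · calc a ^ (-e) * ((1 + e) * W ω - e / a * (W ω * Z ω))
          = W ω * (a ^ (-e) * (1 - e * (Z ω / a - 1))) := by ring
        _ ≤ W ω * Z ω ^ (-e) :=
          mul_le_mul_of_nonneg_left (rpow_neg_tangent_le he0 he1 ha (hZ ω hWω)) (hW ω)
  calc (∫ ω, W ω ∂μ) * a ^ (-e)
      = ∫ ω, a ^ (-e) * ((1 + e) * W ω - e / a * (W ω * Z ω)) ∂μ := by
        rw [integral_const_mul, integral_sub (hWi.const_mul _) (hWZi.const_mul _),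
          integral_const_mul, integral_const_mul, hWZ]
        field_simp
        ring
    _ ≤ ∫ ω, W ω * Z ω ^ (-e) ∂μ :=
        integral_mono (((hWi.const_mul _).sub (hWZi.const_mul _)).const_mul _) hi htangent

lemma mul_indicator_div_rpow {α : Type*} {B : Set α} {c s e : ℝ} (hc : 0 ≤ c) (hs : 0 ≤ s)
    (he : e ≠ 0) (y : α) :
    (c * B.indicator 1 y / s) ^ e = c ^ e * (B.indicator 1 y * s ^ (-e)) := by
  by_cases hy : y ∈ B
  · rw [indicator_of_mem hy, Pi.one_apply, mul_one, one_mul, Real.div_rpow hc hs,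
      Real.rpow_neg hs, div_eq_mul_inv]
  · simp [hy, Real.zero_rpow he]

section Product

variable {ι α : Type*} {B : Set α}

lemma measurable_indicator_comp_eval [MeasurableSpace α] (hB : MeasurableSet B) (i : ι) :
    Measurable fun x : ι → α => B.indicator (1 : α → ℝ) (x i) :=
  (measurable_one.indicator hB).comp (measurable_pi_apply i)

variable [Fintype ι]

noncomputable def numMem (B : Set α) (x : ι → α) : ℝ := ∑ j, B.indicator 1 (x j)

lemma numMem_nonneg (x : ι → α) : 0 ≤ numMem B x :=
  Finset.sum_nonneg fun _ _ => Set.indicator_nonneg (fun _ _ => zero_le_one) _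

lemma numMem_le_card (x : ι → α) : numMem B x ≤ Fintype.card ι := by
  calc numMem B x ≤ ∑ _j : ι, (1 : ℝ) :=
        Finset.sum_le_sum fun _ _ => Set.indicator_le_self' (fun _ _ => zero_le_one) _
    _ = Fintype.card ι := by simp

lemma one_le_numMem {x : ι → α} {i : ι} (hx : x i ∈ B) : 1 ≤ numMem B x := by
  calc (1 : ℝ) = B.indicator 1 (x i) := by simp [hx]
    _ ≤ numMem B x := Finset.single_le_sum (f := fun j => B.indicator (1 : α → ℝ) (x j))
        (fun _ _ => Set.indicator_nonneg (fun _ _ => zero_le_one) _) (Finset.mem_univ i)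

variable [MeasurableSpace α]

lemma measurable_numMem (hB : MeasurableSet B) : Measurable (numMem (ι := ι) B) :=
  Finset.measurable_sum _ fun j _ => measurable_indicator_comp_eval hB j

variable {ν : Measure α} [IsProbabilityMeasure ν]

lemma integral_indicator_comp_eval (hB : MeasurableSet B) (i : ι) :
    ∫ x : ι → α, B.indicator (1 : α → ℝ) (x i) ∂Measure.pi (fun _ => ν) = ν.real B := by
  rw [integral_comp_eval ((measurable_one.indicator hB).aestronglyMeasurable),
    integral_indicator_one hB]

lemma integrable_indicator_comp_eval_mul (hB : MeasurableSet B) (i : ι) {f : (ι → α) → ℝ}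
    (hf : Measurable f) {C : ℝ} (hC : 0 ≤ C) (hfC : ∀ x, x i ∈ B → ‖f x‖ ≤ C) :
    Integrable (fun x => B.indicator (1 : α → ℝ) (x i) * f x) (Measure.pi fun _ => ν) := by
  refine .of_bound ((measurable_indicator_comp_eval hB i).mul hf).aestronglyMeasurable C
    (ae_of_all _ fun x => ?_)
  by_cases hx : x i ∈ B
  · simpa [hx] using hfC x hx
  · simpa [hx] using hC

lemma integrable_indicator_mul_numMem_rpow_neg (hB : MeasurableSet B) (i : ι) {e : ℝ}
    (he : 0 ≤ e) :
    Integrable (fun x => B.indicator (1 : α → ℝ) (x i) * numMem B x ^ (-e))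
      (Measure.pi fun _ => ν) :=
  integrable_indicator_comp_eval_mul hB i ((measurable_numMem hB).pow_const _) zero_le_one
    fun x hx => by
      rw [Real.norm_of_nonneg (Real.rpow_nonneg (numMem_nonneg x) _)]
      exact Real.rpow_le_one_of_one_le_of_nonpos (one_le_numMem hx) (neg_nonpos.2 he)

lemma integral_indicator_mul_numMem (hB : MeasurableSet B) (i : ι) :
    ∫ x, B.indicator (1 : α → ℝ) (x i) * numMem B x ∂Measure.pi (fun _ => ν)
      = ν.real B * (1 + (Fintype.card ι - 1) * ν.real B) := by
  classical
  have : Nonempty ι := ⟨i⟩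
  have hidem : ∀ y, B.indicator (1 : α → ℝ) y * B.indicator 1 y = B.indicator 1 y := by
    intro y; by_cases hy : y ∈ B <;> simp [hy]
  have hindep := iIndepFun_pi (μ := fun _ : ι => ν) (X := fun _ => B.indicator (1 : α → ℝ))
    (fun _ => (measurable_one.indicator hB).aemeasurable)
  have hpair : ∀ j ∈ Finset.univ.erase i,
      ∫ x, B.indicator (1 : α → ℝ) (x i) * B.indicator 1 (x j) ∂Measure.pi (fun _ => ν)
        = ν.real B ^ 2 := by
    intro j hj
    rw [(hindep.indepFun (Finset.ne_of_mem_erase hj).symm).integral_fun_mul_eq_mul_integral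
        (measurable_indicator_comp_eval hB i).aestronglyMeasurable
        (measurable_indicator_comp_eval hB j).aestronglyMeasurable,
      integral_indicator_comp_eval hB, integral_indicator_comp_eval hB, sq]
  have hint : ∀ j, Integrable (fun x => B.indicator (1 : α → ℝ) (x i) * B.indicator 1 (x j))
      (Measure.pi fun _ => ν) := fun j =>
    integrable_indicator_comp_eval_mul hB i (measurable_indicator_comp_eval hB j) zero_le_one
      fun x _ => by by_cases hx : x j ∈ B <;> simp [hx]
  simp_rw [numMem, Finset.mul_sum]
  rw [integral_finsetSum _ fun j _ => hint j, ← Finset.add_sum_erase _ _ (Finset.mem_univ i),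
    Finset.sum_congr rfl hpair]
  simp_rw [hidem]
  rw [integral_indicator_comp_eval hB]
  rw [Finset.sum_const, Finset.card_erase_of_mem (Finset.mem_univ i), Finset.card_univ,
    nsmul_eq_mul, Nat.cast_sub Fintype.card_pos, Nat.cast_one]
  ring

lemma le_integral_indicator_mul_numMem_rpow_neg (hB : MeasurableSet B) (i : ι) {e : ℝ}
    (he0 : 0 ≤ e) (he1 : e ≤ 1) :
    ν.real B * (1 + (Fintype.card ι - 1) * ν.real B) ^ (-e)
      ≤ ∫ x, B.indicator (1 : α → ℝ) (x i) * numMem B x ^ (-e) ∂Measure.pi (fun _ => ν) := by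
  have : Nonempty ι := ⟨i⟩
  have hcard : (1 : ℝ) ≤ Fintype.card ι := by exact_mod_cast Fintype.card_pos
  have ha : 0 < 1 + (Fintype.card ι - 1) * ν.real B := by
    have := measureReal_nonneg (μ := ν) (s := B)
    nlinarith
  have key := mul_integral_le_integral_mul_rpow_neg (μ := Measure.pi fun _ => ν)
    (W := fun x => B.indicator (1 : α → ℝ) (x i)) (Z := numMem B) he0 he1 ha
    (fun _ => Set.indicator_nonneg (fun _ _ => zero_le_one) _)
    (fun x hx => one_pos.trans_le (one_le_numMem (Set.mem_of_indicator_ne_zero hx)))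
    (integrable_comp_eval ((integrable_const 1).indicator hB))
    (integrable_indicator_comp_eval_mul hB i (measurable_numMem hB) (Nat.cast_nonneg _)
      fun x _ => by rw [Real.norm_of_nonneg (numMem_nonneg x)]; exact numMem_le_card x)
    (integrable_indicator_mul_numMem_rpow_neg hB i he0)
    (by rw [integral_indicator_mul_numMem hB, integral_indicator_comp_eval hB]; ring)
  rwa [integral_indicator_comp_eval hB] at key

end Product

instance : IsProbabilityMeasure (volume.restrict (Icc (0:ℝ) 1)) := ⟨by simp⟩

lemma volume_restrict_Icc_real_Iic {q : ℝ} (hq0 : 0 ≤ q) (hq1 : q ≤ 1) :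
    (volume.restrict (Icc (0:ℝ) 1)).real (Iic q) = q := by
  have hset : Iic q ∩ Icc 0 1 = Icc 0 q := by
    ext x; simp only [mem_inter_iff, mem_Iic, mem_Icc]; grind
  rw [measureReal_restrict_apply measurableSet_Iic, hset, Real.volume_real_Icc_of_le hq0,
    sub_zero]

/-- The uniform-allocation mechanism with quantile reserve `q̂` (bidders' quantiles are
i.i.d. uniform on `[0,1]`; each of the `Z` bidders with quantile at most `q̂` gets `1/Z`
and pays `(v(q̂)/Z)^(1/d)`) has expected revenue at least
`n * (v(q̂)/(1+(n-1) q̂))^(1/d) * q̂`. -/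
theorem stmt_9 (n : ℕ) (hn : 0 < n) (d : ℝ) (hd : 1 ≤ d)
    (v : ℝ → ℝ) (qhat : ℝ) (hq : qhat ∈ Icc (0:ℝ) 1) (hv : 0 ≤ v qhat) :
    ∫ qq : Fin n → ℝ,
        (∑ i, (v qhat * (if qq i ≤ qhat then (1:ℝ) else 0)
            / (∑ j, if qq j ≤ qhat then (1:ℝ) else 0)) ^ (1/d))
      ∂(Measure.pi fun _ : Fin n => volume.restrict (Icc (0:ℝ) 1))
    ≥ n * (v qhat / (1 + ((n:ℝ) - 1) * qhat)) ^ (1/d) * qhat := by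
  obtain ⟨hq0, hq1⟩ := hq
  have he0 : 0 < 1 / d := by positivity
  have he1 : 1 / d ≤ 1 := (div_le_one (by linarith)).2 hd
  have ha : 0 < 1 + ((n:ℝ) - 1) * qhat := by
    have : (1:ℝ) ≤ n := by exact_mod_cast hn
    nlinarith
  have hind : ∀ x : ℝ, (if x ≤ qhat then (1:ℝ) else 0) = (Iic qhat).indicator 1 x :=
    fun x => by simp [indicator_apply]
  have hterm : ∀ (qq : Fin n → ℝ) (i : Fin n),
      (v qhat * (Iic qhat).indicator 1 (qq i) / ∑ j, (Iic qhat).indicator 1 (qq j)) ^ (1/d)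
        = v qhat ^ (1/d) * ((Iic qhat).indicator 1 (qq i) * numMem (Iic qhat) qq ^ (-(1/d))) :=
    fun qq i => mul_indicator_div_rpow hv (numMem_nonneg qq) he0.ne' _
  simp_rw [hind, hterm]
  rw [ge_iff_le, integral_finsetSum _ fun i _ =>
    (integrable_indicator_mul_numMem_rpow_neg measurableSet_Iic i he0.le).const_mul _]
  calc (n : ℝ) * (v qhat / (1 + ((n:ℝ) - 1) * qhat)) ^ (1/d) * qhat
      = ∑ _i : Fin n, v qhat ^ (1/d) * (qhat * (1 + ((n:ℝ) - 1) * qhat) ^ (-(1/d))) := by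
        rw [Finset.sum_const, Finset.card_univ, Fintype.card_fin, nsmul_eq_mul,
          Real.div_rpow hv ha.le, Real.rpow_neg ha.le]
        ring
    _ ≤ _ := Finset.sum_le_sum fun i _ => by
        rw [integral_const_mul]
        refine mul_le_mul_of_nonneg_left ?_ (by positivity)
        have hbidder := le_integral_indicator_mul_numMem_rpow_neg
          (ν := volume.restrict (Icc (0:ℝ) 1)) (B := Iic qhat) measurableSet_Iic i he0.le he1
        rwa [volume_restrict_Icc_real_Iic hq0 hq1, Fintype.card_fin] at hbidder
end

section
/- Under the setting with i.i.d. values from a regular distribution F, payment functions p^d with d ≥ 1, the random reserve price mechanism (draw quantile reserve q̂ uniformly on [0,1], allocate uniformly to all bidders with quantile ≤ q̂, charge winners (v(q̂)/Z)^{1/d}) has expected revenue APX ≥ (1/8)·n^{1-1/d}·κ^{1/d}, where κ = v(1/2). -/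
/-!
Fix the reserve quantile `q` and write `Z` for the number of bidders whose quantile is at most
`q`. Each of the `Z` winners pays `(v q / Z) ^ (1/d) ≥ (v q / n) ^ (1/d)`, and `𝔼 Z = n q`, so the
expected revenue at reserve `q` is at least `n ^ (1 - 1/d) * v q ^ (1/d) * q`. For `q ≥ 1/2`,
concavity of the revenue curve `R q = v q * q` between `1/2` and `1` gives `(1 - q) κ ≤ q v q`,
and raising this to the power `1/d` (using `1 - q ≤ q`) gives `κ ^ (1/d) (1 - q) ≤ v q ^ (1/d) q`.
Integrating `1 - q` over `[1/2, 1]` yields the factor `1/8`.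
-/

open MeasureTheory Set
open scoped Classical

noncomputable def winnerCount {ι : Type*} [Fintype ι] (q : ℝ) (x : ι → ℝ) : ℝ :=
  ∑ j, if x j ≤ q then (1:ℝ) else 0

/-- Revenue of the random reserve mechanism at reserve quantile `q`, reserve value `w = v q`,
bidder quantiles `x` and payment exponent `t = 1/d`. -/
noncomputable def randomReserveRevenue {ι : Type*} [Fintype ι] (t w q : ℝ) (x : ι → ℝ) : ℝ :=
  ∑ i, (w * (if x i ≤ q then (1:ℝ) else 0) / winnerCount q x) ^ t

section Pointwise

variable {ι : Type*} [Fintype ι] {t w q : ℝ} (x : ι → ℝ)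

lemma one_le_winnerCount {i : ι} (hi : x i ≤ q) : 1 ≤ winnerCount q x := by
  have h := Finset.single_le_sum (f := fun j => if x j ≤ q then (1:ℝ) else 0)
    (fun j _ => by positivity) (Finset.mem_univ i)
  simp only [if_pos hi] at h
  exact h

lemma winnerCount_nonneg : 0 ≤ winnerCount q x :=
  Finset.sum_nonneg fun _ _ => by positivity

lemma winnerCount_le_card : winnerCount q x ≤ Fintype.card ι :=
  calc winnerCount q x ≤ ∑ _j : ι, (1:ℝ) :=
        Finset.sum_le_sum fun _ _ => ite_le_one le_rfl zero_le_one
    _ = Fintype.card ι := by simp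

lemma randomReserveRevenue_nonneg (hw : 0 ≤ w) : 0 ≤ randomReserveRevenue t w q x :=
  Finset.sum_nonneg fun _ _ =>
    Real.rpow_nonneg (div_nonneg (by positivity) (winnerCount_nonneg x)) _

lemma randomReserveRevenue_le (hw : 0 ≤ w) (ht : 0 ≤ t) :
    randomReserveRevenue t w q x ≤ Fintype.card ι * w ^ t := by
  have share_le (i : ι) : w * (if x i ≤ q then (1:ℝ) else 0) / winnerCount q x ≤ w := by
    by_cases hi : x i ≤ q
    · simpa [hi] using div_le_self hw (one_le_winnerCount x hi)
    · simpa [hi] using hw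
  calc randomReserveRevenue t w q x ≤ ∑ _i : ι, w ^ t :=
        Finset.sum_le_sum fun i _ => Real.rpow_le_rpow
          (div_nonneg (by positivity) (winnerCount_nonneg x)) (share_le i) ht
    _ = Fintype.card ι * w ^ t := by simp

lemma winnerCount_mul_le_randomReserveRevenue (hw : 0 ≤ w) (ht : 0 < t) :
    winnerCount q x * (w / Fintype.card ι) ^ t ≤ randomReserveRevenue t w q x := by
  rw [winnerCount, Finset.sum_mul]
  refine Finset.sum_le_sum fun i _ => ?_
  by_cases hi : x i ≤ q
  · simp only [hi, if_true, one_mul, mul_one]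
    exact Real.rpow_le_rpow (by positivity)
      (div_le_div_of_nonneg_left hw (zero_lt_one.trans_le (one_le_winnerCount x hi))
        (winnerCount_le_card x)) ht.le
  · simp [hi, Real.zero_rpow ht.ne']

end Pointwise

section Expectation

variable {ι : Type*} [Fintype ι] {t w : ℝ}

lemma measurable_randomReserveRevenue (ht : 0 ≤ t) :
    Measurable fun p : ℝ × ℝ × (ι → ℝ) => randomReserveRevenue t p.1 p.2.1 p.2.2 := by
  have hwin (i : ι) :
      Measurable fun p : ℝ × ℝ × (ι → ℝ) => if p.2.2 i ≤ p.2.1 then (1:ℝ) else 0 :=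
    Measurable.ite (measurableSet_le (by fun_prop) (by fun_prop)) measurable_const measurable_const
  refine Finset.measurable_sum _ fun i _ => ?_
  exact (Real.continuous_rpow_const ht).measurable.comp
    ((measurable_fst.mul (hwin i)).div (Finset.measurable_sum _ fun j _ => hwin j))

lemma integral_winnerCount (ν : Measure ℝ) [IsProbabilityMeasure ν] (q : ℝ) :
    ∫ x, winnerCount q x ∂(Measure.pi fun _ : ι => ν) = Fintype.card ι * ν.real (Iic q) := by
  have hpre (j : ι) : MeasurableSet ((fun x : ι → ℝ => x j) ⁻¹' Iic q) :=
    measurableSet_Iic.preimage (measurable_pi_apply j)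
  have hind (j : ι) : (fun x : ι → ℝ => if x j ≤ q then (1:ℝ) else 0)
      = ((fun x : ι → ℝ => x j) ⁻¹' Iic q).indicator 1 := by
    ext x
    simp [indicator_apply]
  simp only [winnerCount]
  rw [integral_finsetSum _ fun j _ =>
    hind j ▸ (integrable_const (1:ℝ)).indicator (hpre j)]
  simp_rw [hind, integral_indicator_one (hpre _), measureReal_def,
    (measurePreserving_eval (fun _ : ι => ν) _).measure_preimage
      measurableSet_Iic.nullMeasurableSet]
  simp

lemma integrable_randomReserveRevenue (μ : Measure (ι → ℝ)) [IsFiniteMeasure μ] (hw : 0 ≤ w)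
    (ht : 0 ≤ t) (q : ℝ) : Integrable (randomReserveRevenue t w q) μ := by
  refine (integrable_const ((Fintype.card ι : ℝ) * w ^ t)).mono'
    ((measurable_randomReserveRevenue ht).comp (measurable_const.prodMk
      (measurable_const.prodMk measurable_id))).aestronglyMeasurable
    (Filter.Eventually.of_forall fun x => ?_)
  rw [Real.norm_of_nonneg (randomReserveRevenue_nonneg x hw)]
  exact randomReserveRevenue_le x hw ht

lemma le_integral_randomReserveRevenue [Nonempty ι] (ν : Measure ℝ) [IsProbabilityMeasure ν]
    (hw : 0 ≤ w) (ht : 0 < t) (q : ℝ) :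
    (Fintype.card ι : ℝ) ^ (1 - t) * w ^ t * ν.real (Iic q)
      ≤ ∫ x, randomReserveRevenue t w q x ∂(Measure.pi fun _ : ι => ν) := by
  have hN : (0:ℝ) < Fintype.card ι := by exact_mod_cast Fintype.card_pos
  calc (Fintype.card ι : ℝ) ^ (1 - t) * w ^ t * ν.real (Iic q)
      = ∫ x, winnerCount q x * (w / Fintype.card ι) ^ t ∂(Measure.pi fun _ : ι => ν) := by
        rw [integral_mul_const, integral_winnerCount, Real.div_rpow hw hN.le,
          Real.rpow_sub hN, Real.rpow_one]
        field_simp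
    _ ≤ _ := integral_mono_of_nonneg
        (Filter.Eventually.of_forall fun x => mul_nonneg (winnerCount_nonneg x) (by positivity))
        (integrable_randomReserveRevenue _ hw ht.le q)
        (Filter.Eventually.of_forall fun x => winnerCount_mul_le_randomReserveRevenue x hw ht)

lemma intervalIntegrable_integral_randomReserveRevenue (μ : Measure (ι → ℝ)) [IsFiniteMeasure μ]
    (ht : 0 ≤ t) {v : ℝ → ℝ} (hv_nonneg : ∀ q ∈ Icc (0:ℝ) 1, 0 ≤ v q)
    (hv_anti : AntitoneOn v (Icc (0:ℝ) 1)) :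
    IntervalIntegrable (fun q => ∫ x, randomReserveRevenue t (v q) q x ∂μ) volume 0 1 := by
  -- `v` is only controlled on `[0, 1]`, so work with its constant extension outside.
  set v' : ℝ → ℝ := fun q => v (projIcc 0 1 zero_le_one q)
  have hproj (q : ℝ) : (projIcc (0:ℝ) 1 zero_le_one q : ℝ) ∈ Icc (0:ℝ) 1 :=
    (projIcc 0 1 zero_le_one q).2
  have hv'_nonneg (q : ℝ) : 0 ≤ v' q := hv_nonneg _ (hproj q)
  have hv'_le (q : ℝ) : v' q ≤ v 0 := hv_anti (left_mem_Icc.2 zero_le_one) (hproj q) (hproj q).1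
  have hv'_meas : Measurable v' := Antitone.measurable fun a b hab =>
    hv_anti (hproj a) (hproj b) (monotone_projIcc _ hab)
  have hG'_meas : Measurable fun q => ∫ x, randomReserveRevenue t (v' q) q x ∂μ :=
    (((measurable_randomReserveRevenue ht).comp ((hv'_meas.comp measurable_fst).prodMk
      measurable_id)).stronglyMeasurable.integral_prod_right' (ν := μ)).measurable
  have hG'_bdd (q : ℝ) : ‖∫ x, randomReserveRevenue t (v' q) q x ∂μ‖
      ≤ Fintype.card ι * v 0 ^ t * μ.real univ := by
    refine norm_integral_le_of_norm_le_const (Filter.Eventually.of_forall fun x => ?_)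
    rw [Real.norm_of_nonneg (randomReserveRevenue_nonneg x (hv'_nonneg q))]
    exact (randomReserveRevenue_le x (hv'_nonneg q) ht).trans (mul_le_mul_of_nonneg_left
      (Real.rpow_le_rpow (hv'_nonneg q) (hv'_le q) ht) (Nat.cast_nonneg _))
  rw [intervalIntegrable_iff_integrableOn_Icc_of_le zero_le_one]
  refine (Measure.integrableOn_of_bounded measure_Icc_lt_top.ne hG'_meas.aestronglyMeasurable
    (Filter.Eventually.of_forall hG'_bdd)).congr_fun (fun q hq => ?_) measurableSet_Icc
  simp only [v', projIcc_of_mem _ hq]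

end Expectation

lemma measureReal_restrict_Icc_zero_one_Iic {q : ℝ} (hq : q ∈ Icc (0:ℝ) 1) :
    (volume.restrict (Icc (0:ℝ) 1)).real (Iic q) = q := by
  have hcut : Iic q ∩ Icc 0 1 = Icc 0 q := by
    ext y
    simp only [mem_inter_iff, mem_Iic, mem_Icc]
    exact ⟨fun h => ⟨h.2.1, h.1⟩, fun h => ⟨h.2, h.1, h.2.trans hq.2⟩⟩
  simp [measureReal_restrict_apply measurableSet_Iic, hcut, hq.1]

lemma two_mul_one_sub_mul_le_of_concaveOn {R : ℝ → ℝ} (hR : ConcaveOn ℝ (Icc (0:ℝ) 1) R)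
    (hR1 : 0 ≤ R 1) {q : ℝ} (hq : q ∈ Icc (1/2 : ℝ) 1) : 2 * (1 - q) * R (1/2) ≤ R q := by
  have h := hR.2 (show (1/2:ℝ) ∈ Icc (0:ℝ) 1 by norm_num) (right_mem_Icc.2 zero_le_one)
    (show (0:ℝ) ≤ 2 - 2 * q by linarith [hq.2]) (show (0:ℝ) ≤ 2 * q - 1 by linarith [hq.1])
    (by ring)
  rw [smul_eq_mul, smul_eq_mul, smul_eq_mul, smul_eq_mul,
    show (2 - 2 * q) * (1/2) + (2 * q - 1) * 1 = q by ring] at h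
  nlinarith [hq.1]

lemma rpow_mul_le_rpow_mul_of_mul_le_mul {t a b x y : ℝ} (ht0 : 0 ≤ t) (ht1 : t ≤ 1)
    (ha : 0 ≤ a) (hb : 0 ≤ b) (hx : 0 ≤ x) (hxy : x ≤ y) (h : x * a ≤ y * b) :
    a ^ t * x ≤ b ^ t * y := by
  have hsplit {c z : ℝ} (hc : 0 ≤ c) (hz : 0 ≤ z) : c ^ t * z = (z * c) ^ t * z ^ (1 - t) := by
    rw [Real.mul_rpow hz hc, mul_comm (z ^ t), mul_assoc, ← Real.rpow_add' hz (by norm_num),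
      add_sub_cancel, Real.rpow_one]
  have hy : 0 ≤ y := hx.trans hxy
  rw [hsplit ha hx, hsplit hb hy]
  exact mul_le_mul (Real.rpow_le_rpow (by positivity) h ht0)
    (Real.rpow_le_rpow hx hxy (by linarith)) (by positivity) (by positivity)

lemma div_eight_le_integral_of_le_mul_one_sub {F : ℝ → ℝ} {c : ℝ}
    (hF : IntervalIntegrable F volume 0 1) (hF_nonneg : ∀ q ∈ Icc (0:ℝ) 1, 0 ≤ F q)
    (hF_ge : ∀ q ∈ Icc (1/2 : ℝ) 1, c * (1 - q) ≤ F q) :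
    c / 8 ≤ ∫ q in (0:ℝ)..1, F q := by
  have hhalf : (1/2 : ℝ) ∈ uIcc 0 1 := by norm_num
  have hsplit := intervalIntegral.integral_add_adjacent_intervals
    (hF.mono_set (uIcc_subset_uIcc_left hhalf)) (hF.mono_set (uIcc_subset_uIcc_right hhalf))
  have hlower : 0 ≤ ∫ q in (0:ℝ)..1/2, F q :=
    intervalIntegral.integral_nonneg (by norm_num) fun q hq =>
      hF_nonneg q ⟨hq.1, by linarith [hq.2]⟩
  have hupper : ∫ q in (1/2:ℝ)..1, c * (1 - q) ≤ ∫ q in (1/2:ℝ)..1, F q :=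
    intervalIntegral.integral_mono_on (by norm_num)
      (by apply Continuous.intervalIntegrable; fun_prop)
      (hF.mono_set (uIcc_subset_uIcc_right hhalf)) hF_ge
  have hramp : ∫ q in (1/2:ℝ)..1, c * (1 - q) = c / 8 := by
    rw [intervalIntegral.integral_const_mul, intervalIntegral.integral_sub intervalIntegrable_const
      intervalIntegral.intervalIntegrable_id, integral_id]
    norm_num
    ring
  linarith

theorem stmt_10_general (n : ℕ) (hn : 0 < n) (d : ℝ) (hd : 1 ≤ d)
    (v : ℝ → ℝ)
    (hv_nonneg : ∀ q ∈ Icc (0:ℝ) 1, 0 ≤ v q)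
    (hv_anti : AntitoneOn v (Icc (0:ℝ) 1))
    (hconc : ConcaveOn ℝ (Icc (0:ℝ) 1) (fun q => v q * q))
    (κ : ℝ) (hκ : κ = v (1/2)) :
    (∫ qhat in (0:ℝ)..1,
      ∫ qq : Fin n → ℝ,
        (∑ i, (v qhat * (if qq i ≤ qhat then (1:ℝ) else 0)
            / (∑ j, if qq j ≤ qhat then (1:ℝ) else 0)) ^ (1/d))
      ∂(Measure.pi fun _ : Fin n => volume.restrict (Icc (0:ℝ) 1)))
    ≥ (1/8) * (n:ℝ) ^ (1 - 1/d) * κ ^ (1/d) := by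
  have : Nonempty (Fin n) := ⟨⟨0, hn⟩⟩
  have : IsProbabilityMeasure (volume.restrict (Icc (0:ℝ) 1)) := ⟨by simp⟩
  have ht : 0 < 1/d := by positivity
  have ht1 : 1/d ≤ 1 := (div_le_one (by linarith)).2 hd
  have hκ_nonneg : 0 ≤ κ := hκ ▸ hv_nonneg _ (by norm_num)
  have hupper_half (q : ℝ) (hq : q ∈ Icc (1/2 : ℝ) 1) :
      (n:ℝ) ^ (1 - 1/d) * κ ^ (1/d) * (1 - q) ≤ ∫ x, randomReserveRevenue (1/d) (v q) q x
        ∂(Measure.pi fun _ : Fin n => volume.restrict (Icc (0:ℝ) 1)) := by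
    have hq01 : q ∈ Icc (0:ℝ) 1 := ⟨by linarith [hq.1], hq.2⟩
    have hrevenue : (1 - q) * κ ≤ q * v q := by
      have h := two_mul_one_sub_mul_le_of_concaveOn hconc
        (by simpa using hv_nonneg 1 (right_mem_Icc.2 zero_le_one)) hq
      rw [hκ]
      linarith
    calc (n:ℝ) ^ (1 - 1/d) * κ ^ (1/d) * (1 - q)
        ≤ (n:ℝ) ^ (1 - 1/d) * (v q ^ (1/d) * q) := by
          rw [mul_assoc]
          exact mul_le_mul_of_nonneg_left (rpow_mul_le_rpow_mul_of_mul_le_mul ht.le ht1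
            hκ_nonneg (hv_nonneg q hq01) (by linarith [hq.2]) (by linarith [hq.1]) hrevenue)
            (by positivity)
      _ = (Fintype.card (Fin n) : ℝ) ^ (1 - 1/d) * v q ^ (1/d)
            * (volume.restrict (Icc (0:ℝ) 1)).real (Iic q) := by
          rw [measureReal_restrict_Icc_zero_one_Iic hq01, Fintype.card_fin, mul_assoc]
      _ ≤ _ := le_integral_randomReserveRevenue _ (hv_nonneg q hq01) ht q
  calc (1/8) * (n:ℝ) ^ (1 - 1/d) * κ ^ (1/d) = (n:ℝ) ^ (1 - 1/d) * κ ^ (1/d) / 8 := by ring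
    _ ≤ _ := div_eight_le_integral_of_le_mul_one_sub
      (intervalIntegrable_integral_randomReserveRevenue _ ht.le hv_nonneg hv_anti)
      (fun q hq => integral_nonneg fun x => randomReserveRevenue_nonneg x (hv_nonneg q hq))
      hupper_half

/-- Random reserve price mechanism: draw a quantile reserve `q̂` uniformly on `[0,1]`,
allocate uniformly to all bidders with quantile at most `q̂` (quantiles are i.i.d. uniform
on `[0,1]`), and charge each of the `Z` winners `(v(q̂)/Z)^(1/d)`.  For a regular
distribution (revenue curve `q ↦ v q * q` concave, `v` nonnegative and nonincreasing on
`[0,1]`) its expected revenue is at least `(1/8) n^(1-1/d) κ^(1/d)` with `κ = v(1/2)`. -/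
theorem stmt_10 (n : ℕ) (hn : 0 < n) (d : ℝ) (hd : 1 ≤ d)
    (v : ℝ → ℝ)
    (hv_nonneg : ∀ q ∈ Icc (0:ℝ) 1, 0 ≤ v q)
    (hv_anti : AntitoneOn v (Icc (0:ℝ) 1))
    (hconc : ConcaveOn ℝ (Icc (0:ℝ) 1) (fun q => v q * q))
    (hv1 : v 1 = 0)
    (κ : ℝ) (hκ : κ = v (1/2)) :
    (∫ qhat in (0:ℝ)..1,
      ∫ qq : Fin n → ℝ,
        (∑ i, (v qhat * (if qq i ≤ qhat then (1:ℝ) else 0)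
            / (∑ j, if qq j ≤ qhat then (1:ℝ) else 0)) ^ (1/d))
      ∂(Measure.pi fun _ : Fin n => volume.restrict (Icc (0:ℝ) 1)))
    ≥ (1/8) * (n:ℝ) ^ (1 - 1/d) * κ ^ (1/d) :=
  stmt_10_general n hn d hd v hv_nonneg hv_anti hconc κ hκ
end

section
/- Let c : ℝ_{≥0} → ℝ_{≥0} be convex and strictly increasing, and let P be a nonnegative random variable. Then c^{-1}(E[c(P)]) ≥ E[P]. Consequently, replacing a payment rule p_i(v_i, v_{-i}, r) by the deterministic payment h_i(v_i) = c^{-1}(E_{v_{-i},r}[c(p_i(v_i,v_{-i},r))]) preserves each bidder's interim perceived payment and weakly increases the auctioneer's expected revenue. -/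
open MeasureTheory Set

/-!
By Jensen's inequality `c (E[P]) ≤ E[c(P)] = c g`, and `c` is strictly increasing, so `E[P] ≤ g`.
Jensen needs `c` continuous on the closed half-line; in the interior this is automatic for a
convex function, and at the endpoint `c` is squeezed between `c a` (monotonicity) and its chord
over `[a, a + 1]` (convexity).
-/

lemma ConvexOn.le_chord_Icc_add_one {f : ℝ → ℝ} {a x : ℝ} (hf : ConvexOn ℝ (Ici a) f)
    (hx : x ∈ Icc a (a + 1)) : f x ≤ f a + (x - a) * (f (a + 1) - f a) := by
  have h := hf.2 (le_refl a) (mem_Ici.2 (by linarith : a ≤ a + 1))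
    (by linarith [hx.2] : 0 ≤ 1 - (x - a)) (by linarith [hx.1] : 0 ≤ x - a) (by ring)
  have hcomb : (1 - (x - a)) * a + (x - a) * (a + 1) = x := by ring
  simp only [smul_eq_mul, hcomb] at h
  linarith

lemma ConvexOn.continuousWithinAt_Ici_of_monotoneOn {f : ℝ → ℝ} {a : ℝ}
    (hconv : ConvexOn ℝ (Ici a) f) (hmono : MonotoneOn f (Ici a)) :
    ContinuousWithinAt f (Ici a) a := by
  have hchord : Filter.Tendsto (fun x => f a + (x - a) * (f (a + 1) - f a))
      (nhdsWithin a (Ici a)) (nhds (f a)) := by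
    have : Continuous fun x => f a + (x - a) * (f (a + 1) - f a) := by fun_prop
    simpa using (this.tendsto a).mono_left nhdsWithin_le_nhds
  refine tendsto_of_tendsto_of_tendsto_of_le_of_le' tendsto_const_nhds hchord ?_ ?_
  · filter_upwards [self_mem_nhdsWithin] with x hx using hmono (le_refl a) hx hx
  · filter_upwards [self_mem_nhdsWithin, nhdsWithin_le_nhds (Iic_mem_nhds (lt_add_one a))]
      with x hxa hx1
    exact hconv.le_chord_Icc_add_one ⟨hxa, hx1⟩

lemma ConvexOn.continuousOn_Ici_of_monotoneOn {f : ℝ → ℝ} {a : ℝ}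
    (hconv : ConvexOn ℝ (Ici a) f) (hmono : MonotoneOn f (Ici a)) :
    ContinuousOn f (Ici a) :=
  hconv.continuousOn_Ici (hconv.continuousWithinAt_Ici_of_monotoneOn hmono)

theorem ConvexOn.integral_le_of_map_eq_integral {Ω : Type*} [MeasurableSpace Ω]
    {μ : Measure Ω} [IsProbabilityMeasure μ] {c : ℝ → ℝ} {a : ℝ}
    (hconv : ConvexOn ℝ (Ici a) c) (hmono : StrictMonoOn c (Ici a))
    {Q : Ω → ℝ} (hQ : ∀ᵐ ω ∂μ, a ≤ Q ω) (hQ_int : Integrable Q μ)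
    (hcQ_int : Integrable (fun ω => c (Q ω)) μ)
    {g : ℝ} (hg : a ≤ g) (hgc : c g = ∫ ω, c (Q ω) ∂μ) : ∫ ω, Q ω ∂μ ≤ g := by
  have hmean : a ≤ ∫ ω, Q ω ∂μ := by
    simpa using integral_mono_ae (integrable_const a) hQ_int hQ
  have hjensen : c (∫ ω, Q ω ∂μ) ≤ ∫ ω, c (Q ω) ∂μ :=
    hconv.map_integral_le (hconv.continuousOn_Ici_of_monotoneOn hmono.monotoneOn) isClosed_Ici
      hQ hQ_int hcQ_int
  exact (hmono.le_iff_le hmean hg).1 (hjensen.trans hgc.ge)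

/-- Let `c` be convex and strictly increasing on `[0,∞)`.  Then for any nonnegative
integrable random variable `P`, `c⁻¹(E[c(P)]) ≥ E[P]` (stated: any nonnegative `g` with
`c g = E[c(P)]` satisfies `g ≥ E[P]`).  Consequently, replacing a payment rule
`pp(v, ω)` by the deterministic payment `h v` with `c (h v) = E_ω[c (pp v ω)]` preserves
each bidder's interim perceived payment and weakly increases each interim payment. -/
theorem stmt_14 {Ω : Type*} [MeasurableSpace Ω] (μ : Measure Ω) [IsProbabilityMeasure μ]
    (c : ℝ → ℝ)
    (hconv : ConvexOn ℝ (Ici 0) c)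
    (hmono : StrictMonoOn c (Ici 0))
    (P : Ω → ℝ) (hP_nonneg : ∀ ω, 0 ≤ P ω)
    (hP_int : Integrable P μ) (hcP_int : Integrable (fun ω => c (P ω)) μ)
    (pp : ℝ → Ω → ℝ) (hpp_nonneg : ∀ val ω, 0 ≤ pp val ω)
    (hpp_int : ∀ val, Integrable (pp val) μ)
    (hcpp_int : ∀ val, Integrable (fun ω => c (pp val ω)) μ)
    (h : ℝ → ℝ) (hh_nonneg : ∀ val, 0 ≤ h val)
    (hh_def : ∀ val, c (h val) = ∫ ω, c (pp val ω) ∂μ) :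
    (∀ g : ℝ, 0 ≤ g → c g = ∫ ω, c (P ω) ∂μ → ∫ ω, P ω ∂μ ≤ g) ∧
    (∀ val : ℝ, c (h val) = ∫ ω, c (pp val ω) ∂μ ∧ ∫ ω, pp val ω ∂μ ≤ h val) :=
  ⟨fun _ hg hgc => hconv.integral_le_of_map_eq_integral hmono (ae_of_all μ hP_nonneg) hP_int
      hcP_int hg hgc,
    fun val => ⟨hh_def val, hconv.integral_le_of_map_eq_integral hmono
      (ae_of_all μ (hpp_nonneg val)) (hpp_int val) (hcpp_int val) (hh_nonneg val) (hh_def val)⟩⟩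
end

section
/- Let n ≥ 2, and let values be i.i.d. taking value 1 with probability log(n)/√n and 1−ε otherwise. In the highest-value-wins auction with random tie-breaking and payment c(p) = p^2 (so a bidder with interim allocation x pays at most √(x·v)), the total expected revenue is at most 3·n^{1/4}·log(n). -/
open MeasureTheory ProbabilityTheory Set Real
open scoped Classical

private lemma aux_log_lt_sqrt (n : ℕ) (hn1 : (1:ℝ) < n) : Real.log n < Real.sqrt n := by
  set x := (n:ℝ) ^ ((1:ℝ)/4) with hxd
  have hx1 : 1 < x := Real.one_lt_rpow_iff_of_pos (by linarith) |>.2 (Or.inl ⟨hn1, by norm_num⟩)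
  have hlog : Real.log n = 4 * Real.log x := by
    rw [hxd, Real.log_rpow (by linarith)]; ring
  have hsq : Real.sqrt n = x ^ 2 := by
    rw [Real.sqrt_eq_rpow, hxd, ← Real.rpow_natCast ((n:ℝ) ^ ((1:ℝ)/4)) 2,
      ← Real.rpow_mul (by linarith)]
    norm_num
  have h1 : Real.log x < x - 1 := Real.log_lt_sub_one_of_pos (by linarith) (ne_of_gt hx1)
  rw [hlog, hsq]; nlinarith [sq_nonneg (x - 2)]

private lemma aux_final (n : ℕ) (hn : 2 ≤ n) :
    (n:ℝ) ^ ((1:ℝ)/4) * Real.sqrt (Real.log n) + 1 ≤ 3 * (n:ℝ) ^ ((1:ℝ)/4) * Real.log n := by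
  have hn1 : (1:ℝ) ≤ n := by exact_mod_cast Nat.one_le_of_lt hn
  have hn2 : (2:ℝ) ≤ n := by exact_mod_cast hn
  set x := (n:ℝ) ^ ((1:ℝ)/4) with hx
  have hx1 : 1 ≤ x := Real.one_le_rpow hn1 (by norm_num)
  set a := Real.sqrt (Real.log n) with ha
  have ha0 : 0 ≤ a := Real.sqrt_nonneg _
  have haL : a ^ 2 = Real.log n := Real.sq_sqrt (Real.log_nonneg hn1)
  have hL : (0.6931471803 : ℝ) ≤ Real.log n :=
    le_trans Real.log_two_gt_d9.le (Real.log_le_log (by norm_num) hn2)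
  rw [← haL]
  nlinarith [sq_nonneg (a - 83/100), mul_nonneg (sub_nonneg.2 hx1) (mul_nonneg ha0 ha0),
    mul_nonneg (sub_nonneg.2 hx1) ha0, sq_nonneg a]

/-- With `n` bidders whose i.i.d. values are `1` with probability `log n / √n` and `1-ε`
otherwise, in the highest-value-wins auction with random tie-breaking and payment
function `c(p) = p²` (so the interim payment of a bidder with value `val` and interim
allocation `x̂(val)` is at most `√(val · x̂(val))`), the total expected revenue is at
most `3 n^(1/4) log n`. -/
theorem stmt_16 {Ω : Type*} [MeasurableSpace Ω] (μ : Measure Ω) [IsProbabilityMeasure μ]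
    (n : ℕ) (hn : 2 ≤ n) (ε : ℝ) (hε : 0 < ε) (hε1 : ε < 1)
    (V : Fin n → Ω → ℝ)
    (hmeas : ∀ i, Measurable (V i))
    (hvals : ∀ i ω, V i ω = 1 ∨ V i ω = 1 - ε)
    (hprob : ∀ i, μ {ω | V i ω = 1} = ENNReal.ofReal (Real.log n / Real.sqrt n))
    (hindep : iIndepFun V μ)
    -- share of the good of bidder i: highest value wins, uniform tie-breaking
    (s : Fin n → Ω → ℝ)
    (hs : ∀ i ω, s i ω =
      if ∀ j, V j ω ≤ V i ω then
        1 / ((Finset.univ.filter (fun j : Fin n => ∀ k, V k ω ≤ V j ω)).card : ℝ)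
      else 0)
    -- interim allocation: conditional expectation of the share given the bidder's value
    (xhat : Fin n → ℝ → ℝ)
    (hxhat : ∀ i val, xhat i val =
      (∫ ω in {ω | V i ω = val}, s i ω ∂μ) / (μ {ω | V i ω = val}).toReal)
    -- interim payments, bounded by √(val · x̂) since c(p) = p²
    (phat : Fin n → ℝ → ℝ)
    (hphat_nonneg : ∀ i val, 0 ≤ phat i val)
    (hIR : ∀ i val, (val = 1 ∨ val = 1 - ε) →
      phat i val ≤ Real.sqrt (val * xhat i val)) :
    ∑ i, ((Real.log n / Real.sqrt n) * phat i 1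
        + (1 - Real.log n / Real.sqrt n) * phat i (1 - ε))
      ≤ 3 * (n:ℝ) ^ ((1:ℝ)/4) * Real.log n := by
  have hn1 : (1:ℝ) < n := by exact_mod_cast Nat.lt_of_lt_of_le one_lt_two hn
  have hn0 : (0:ℝ) < n := by linarith
  have hLpos : 0 < Real.log n := Real.log_pos hn1
  have hsn : (0:ℝ) < Real.sqrt n := Real.sqrt_pos.mpr hn0
  set q : ℝ := Real.log n / Real.sqrt n with hq_def
  have hq0 : 0 < q := div_pos hLpos hsn
  -- q < 1
  have hlog_lt : Real.log n < Real.sqrt n := aux_log_lt_sqrt n hn1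
  have hq1 : q < 1 := (div_lt_one hsn).2 hlog_lt
  have hq1' : (0:ℝ) < 1 - q := by linarith
  -- basic sets
  set B : Fin n → Set Ω := fun i => {ω | V i ω = 1} with hB_def
  set B' : Fin n → Set Ω := fun i => {ω | V i ω = 1 - ε} with hB'_def
  have hBmeas : ∀ i, MeasurableSet (B i) := fun i => (hmeas i) (measurableSet_singleton 1)
  have hB'meas : ∀ i, MeasurableSet (B' i) := fun i => (hmeas i) (measurableSet_singleton (1 - ε))
  have hcompl : ∀ i, B' i = (B i)ᶜ := by
    intro i; ext ω
    simp only [hB_def, hB'_def, mem_setOf_eq, mem_compl_iff]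
    constructor
    · intro h h1; rw [h1] at h; linarith
    · intro h; rcases hvals i ω with h1 | h1
      · exact absurd h1 h
      · exact h1
  have hμB' : ∀ i, μ (B' i) = ENNReal.ofReal (1 - q) := by
    intro i
    rw [hcompl i, measure_compl (hBmeas i) (measure_ne_top μ _), hprob i, measure_univ,
      ENNReal.ofReal_sub 1 hq0.le, ENNReal.ofReal_one]
  -- measurability and bounds for s
  have hA : ∀ i, MeasurableSet {ω | ∀ k, V k ω ≤ V i ω} := by
    intro i
    have : {ω | ∀ k, V k ω ≤ V i ω} = ⋂ k, {ω | V k ω ≤ V i ω} := by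
      ext ω; simp [Set.mem_iInter]
    rw [this]
    exact MeasurableSet.iInter fun k => measurableSet_le (hmeas k) (hmeas i)
  have hgmeas : Measurable (fun ω =>
      ((Finset.univ.filter (fun j : Fin n => ∀ k, V k ω ≤ V j ω)).card : ℝ)) := by
    have : (fun ω => ((Finset.univ.filter (fun j : Fin n => ∀ k, V k ω ≤ V j ω)).card : ℝ))
        = fun ω => ∑ j : Fin n, if ∀ k, V k ω ≤ V j ω then (1:ℝ) else 0 := by
      funext ω; rw [Finset.card_filter]; push_cast; rfl
    rw [this]
    exact Finset.measurable_sum _ fun j _ =>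
      Measurable.ite (hA j) measurable_const measurable_const
  have hs_meas : ∀ i, Measurable (s i) := by
    intro i
    have : s i = fun ω => if ∀ j, V j ω ≤ V i ω then
        (1 / ((Finset.univ.filter (fun j : Fin n => ∀ k, V k ω ≤ V j ω)).card : ℝ)) else 0 := by
      funext ω; exact hs i ω
    rw [this]
    exact Measurable.ite (hA i) (measurable_const.div hgmeas) measurable_const
  have hs_nonneg : ∀ i ω, 0 ≤ s i ω := by
    intro i ω; rw [hs]; split
    · positivity
    · exact le_refl 0
  -- s i ≤ 1 and sum of shares ≤ 1
  have hs_le_one : ∀ i ω, s i ω ≤ 1 := by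
    intro i ω; rw [hs]; split
    · rename_i hcond
      have hmem : i ∈ Finset.univ.filter (fun j : Fin n => ∀ k, V k ω ≤ V j ω) := by
        simp [hcond]
      have hcard : 1 ≤ (Finset.univ.filter (fun j : Fin n => ∀ k, V k ω ≤ V j ω)).card :=
        Finset.card_pos.2 ⟨i, hmem⟩
      have : (1:ℝ) ≤ ((Finset.univ.filter (fun j : Fin n => ∀ k, V k ω ≤ V j ω)).card : ℝ) := by
        exact_mod_cast hcard
      rw [div_le_one (by linarith)]; exact this
    · norm_num
  have hsum_le : ∀ ω, ∑ i, s i ω ≤ 1 := by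
    intro ω
    set c := (Finset.univ.filter (fun j : Fin n => ∀ k, V k ω ≤ V j ω)).card with hc
    have h1 : ∑ i, s i ω
        = ∑ i ∈ Finset.univ.filter (fun j : Fin n => ∀ k, V k ω ≤ V j ω), (1 / (c:ℝ)) := by
      rw [Finset.sum_filter]
      exact Finset.sum_congr rfl fun i _ => hs i ω
    rw [h1, Finset.sum_const, ← hc, nsmul_eq_mul]
    rcases Nat.eq_zero_or_pos c with h0 | hpos
    · simp [h0]
    · have : (0:ℝ) < c := by exact_mod_cast hpos
      rw [mul_one_div, div_self (ne_of_gt this)]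
  -- integrability
  have hs_int : ∀ i, Integrable (s i) μ := by
    intro i
    refine Integrable.mono' (integrable_const (1:ℝ)) (hs_meas i).aestronglyMeasurable ?_
    filter_upwards with ω
    rw [Real.norm_eq_abs, abs_of_nonneg (hs_nonneg i ω)]
    exact hs_le_one i ω
  -- aggregate 1 : ∑ i, ∫ in B i, s i ≤ 1
  have hagg1 : ∑ i, ∫ ω in B i, s i ω ∂μ ≤ 1 := by
    have h1 : ∀ i : Fin n, ∫ ω in B i, s i ω ∂μ = ∫ ω, (B i).indicator (s i) ω ∂μ := fun i =>
      (integral_indicator (hBmeas i)).symm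
    simp_rw [h1]
    rw [← integral_finset_sum _ (fun i _ => (hs_int i).indicator (hBmeas i))]
    calc ∫ ω, ∑ i, (B i).indicator (s i) ω ∂μ ≤ ∫ _, (1:ℝ) ∂μ := by
          apply integral_mono
            (integrable_finset_sum _ (fun i _ => (hs_int i).indicator (hBmeas i)))
            (integrable_const 1)
          intro ω
          calc ∑ i, (B i).indicator (s i) ω ≤ ∑ i, s i ω :=
                Finset.sum_le_sum fun i _ =>
                  Set.indicator_le_self' (fun x _ => hs_nonneg i x) ω
            _ ≤ 1 := hsum_le ω
      _ = 1 := by simp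
  -- aggregate 2
  set C : Set Ω := ⋂ j, V j ⁻¹' {1 - ε} with hC_def
  have hμC : μ C = ENNReal.ofReal (1 - q) ^ n := by
    have h := hindep.meas_iInter (s := fun j : Fin n => V j ⁻¹' {1 - ε})
      (fun i => ⟨{1 - ε}, measurableSet_singleton _, rfl⟩)
    have h2 : ∀ j : Fin n, μ (V j ⁻¹' {1 - ε}) = ENNReal.ofReal (1 - q) := by
      intro j
      have he : V j ⁻¹' {1 - ε} = B' j := by
        ext ω; simp [hB'_def]
      rw [he, hμB']
    rw [hC_def, h]
    simp only [h2, Finset.prod_const, Finset.card_univ, Fintype.card_fin]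
  have hagg2 : ∑ i, ∫ ω in B' i, s i ω ∂μ ≤ (1 - q) ^ n := by
    have h1 : ∀ i : Fin n, ∫ ω in B' i, s i ω ∂μ = ∫ ω, (B' i).indicator (s i) ω ∂μ := fun i =>
      (integral_indicator (hB'meas i)).symm
    simp_rw [h1]
    rw [← integral_finset_sum _ (fun i _ => (hs_int i).indicator (hB'meas i))]
    have hCmeas : MeasurableSet C :=
      MeasurableSet.iInter fun j => (hmeas j) (measurableSet_singleton _)
    have hpt : ∀ ω, ∑ i, (B' i).indicator (s i) ω ≤ C.indicator (fun _ => (1:ℝ)) ω := by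
      intro ω
      by_cases hωC : ω ∈ C
      · rw [Set.indicator_of_mem hωC]
        calc ∑ i, (B' i).indicator (s i) ω ≤ ∑ i, s i ω :=
              Finset.sum_le_sum fun i _ =>
                Set.indicator_le_self' (fun x _ => hs_nonneg i x) ω
          _ ≤ 1 := hsum_le ω
      · rw [Set.indicator_of_notMem hωC]
        have : ∀ i, (B' i).indicator (s i) ω = 0 := by
          intro i
          by_cases hωB : ω ∈ B' i
          · rw [Set.indicator_of_mem hωB]
            obtain ⟨j, hj⟩ : ∃ j, V j ω ≠ 1 - ε := by
              by_contra hcon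
              push_neg at hcon
              exact hωC (Set.mem_iInter.2 fun j => hcon j)
            have hVj : V j ω = 1 := (hvals j ω).resolve_right hj
            have hVi : V i ω = 1 - ε := hωB
            rw [hs]
            rw [if_neg]
            push_neg
            exact ⟨j, by rw [hVj, hVi]; linarith⟩
          · exact Set.indicator_of_notMem hωB _
        rw [Finset.sum_eq_zero fun i _ => this i]
    calc ∫ ω, ∑ i, (B' i).indicator (s i) ω ∂μ
        ≤ ∫ ω, C.indicator (fun _ => (1:ℝ)) ω ∂μ := by
          apply integral_mono
            (integrable_finset_sum _ (fun i _ => (hs_int i).indicator (hB'meas i)))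
            ((integrable_const 1).indicator hCmeas) hpt
      _ = (μ C).toReal := by rw [integral_indicator_const _ hCmeas]; simp; rfl
      _ = (1 - q) ^ n := by
          rw [hμC, ← ENNReal.ofReal_pow (by linarith), ENNReal.toReal_ofReal (by positivity)]
  -- per-bidder identities
  have hxhat_nonneg : ∀ i val, 0 ≤ xhat i val := by
    intro i val; rw [hxhat]
    exact div_nonneg
      (setIntegral_nonneg (hmeas i (measurableSet_singleton val)) fun ω _ => hs_nonneg i ω)
      ENNReal.toReal_nonneg
  have hx1 : ∀ i, q * xhat i 1 = ∫ ω in B i, s i ω ∂μ := by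
    intro i
    have ht : (μ {ω | V i ω = 1}).toReal = q := by rw [hprob i, ENNReal.toReal_ofReal hq0.le]
    rw [hxhat, ht]
    field_simp
    rfl
  have hx2 : ∀ i, (1 - q) * xhat i (1 - ε) = ∫ ω in B' i, s i ω ∂μ := by
    intro i
    have ht : (μ {ω | V i ω = 1 - ε}).toReal = 1 - q := by
      rw [show {ω | V i ω = 1 - ε} = B' i from rfl, hμB' i,
        ENNReal.toReal_ofReal (by linarith)]
    rw [hxhat, ht]
    field_simp
    rfl
  -- step 1: bound payments by sqrt of interim allocations
  have hstep1 : ∑ i, (q * phat i 1 + (1 - q) * phat i (1 - ε))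
      ≤ ∑ i, q * Real.sqrt (xhat i 1) + ∑ i, (1 - q) * Real.sqrt (xhat i (1 - ε)) := by
    rw [← Finset.sum_add_distrib]
    apply Finset.sum_le_sum; intro i _
    have h1 : phat i 1 ≤ Real.sqrt (xhat i 1) := by
      have h := hIR i 1 (Or.inl rfl); rwa [one_mul] at h
    have h2 : phat i (1 - ε) ≤ Real.sqrt (xhat i (1 - ε)) := by
      refine (hIR i (1 - ε) (Or.inr rfl)).trans (Real.sqrt_le_sqrt ?_)
      nlinarith [hxhat_nonneg i (1 - ε)]
    have hm1 := mul_le_mul_of_nonneg_left h1 hq0.le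
    have hm2 := mul_le_mul_of_nonneg_left h2 (by linarith : (0:ℝ) ≤ 1 - q)
    linarith
  -- generic Cauchy-Schwarz bound
  have hCSgen : ∀ (t : ℝ), 0 ≤ t → ∀ (y : Fin n → ℝ), (∀ i, 0 ≤ y i) → ∀ (M : ℝ),
      (∑ i, t * y i) ≤ M →
      ∑ i, t * Real.sqrt (y i) ≤ Real.sqrt t * (Real.sqrt M * Real.sqrt n) := by
    intro t ht0 y hy M hM
    have key : ∀ i : Fin n, t * Real.sqrt (y i)
        = Real.sqrt t * (Real.sqrt (t * y i) * Real.sqrt 1) := by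
      intro i
      rw [Real.sqrt_one, mul_one, Real.sqrt_mul ht0, ← mul_assoc, Real.mul_self_sqrt ht0]
    calc ∑ i, t * Real.sqrt (y i)
        = Real.sqrt t * ∑ i, Real.sqrt (t * y i) * Real.sqrt 1 := by
          rw [Finset.mul_sum]; exact Finset.sum_congr rfl fun i _ => key i
      _ ≤ Real.sqrt t * (Real.sqrt (∑ i, t * y i) * Real.sqrt (∑ _i : Fin n, (1:ℝ))) := by
          refine mul_le_mul_of_nonneg_left ?_ (Real.sqrt_nonneg t)
          exact Real.sum_sqrt_mul_sqrt_le _ (fun i => mul_nonneg ht0 (hy i))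
            (fun i => zero_le_one)
      _ ≤ Real.sqrt t * (Real.sqrt M * Real.sqrt n) := by
          have h1 : Real.sqrt (∑ i, t * y i) ≤ Real.sqrt M := Real.sqrt_le_sqrt hM
          have h2 : Real.sqrt (∑ _i : Fin n, (1:ℝ)) = Real.sqrt n := by
            norm_num
          rw [h2]
          exact mul_le_mul_of_nonneg_left
            (mul_le_mul_of_nonneg_right h1 (Real.sqrt_nonneg _)) (Real.sqrt_nonneg t)
  -- first sum
  have hCS1 : ∑ i, q * Real.sqrt (xhat i 1)
      ≤ Real.sqrt q * (Real.sqrt 1 * Real.sqrt n) := by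
    refine hCSgen q hq0.le _ (fun i => hxhat_nonneg i 1) 1 ?_
    calc ∑ i, q * xhat i 1 = ∑ i, ∫ ω in B i, s i ω ∂μ :=
          Finset.sum_congr rfl fun i _ => hx1 i
      _ ≤ 1 := hagg1
  -- second sum
  have hCS2 : ∑ i, (1 - q) * Real.sqrt (xhat i (1 - ε))
      ≤ Real.sqrt (1 - q) * (Real.sqrt ((1 - q) ^ n) * Real.sqrt n) := by
    refine hCSgen (1 - q) (by linarith) _ (fun i => hxhat_nonneg i (1 - ε)) _ ?_
    calc ∑ i, (1 - q) * xhat i (1 - ε) = ∑ i, ∫ ω in B' i, s i ω ∂μ :=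
          Finset.sum_congr rfl fun i _ => hx2 i
      _ ≤ (1 - q) ^ n := hagg2
  -- key exponential bound : (1-q)^n * n ≤ 1
  have hqn : q * n = Real.log n * Real.sqrt n := by
    rw [hq_def, div_mul_eq_mul_div, mul_div_assoc, Real.div_sqrt]
  have hone_le_sqrt : (1:ℝ) ≤ Real.sqrt n := by
    rw [show (1:ℝ) = Real.sqrt 1 by simp]
    exact Real.sqrt_le_sqrt (by linarith)
  have hpow : (1 - q) ^ n * n ≤ 1 := by
    have e1 : (1 - q) ≤ Real.exp (-q) := by
      have := Real.add_one_le_exp (-q); linarith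
    have e2 : (1 - q) ^ n ≤ Real.exp (-q) ^ n := pow_le_pow_left₀ (by linarith) e1 n
    have e3 : Real.exp (-q) ^ n = Real.exp (-(q * n)) := by
      rw [← Real.exp_nat_mul]; ring_nf
    have e4 : Real.exp (-(q * n)) = (n:ℝ) ^ (-Real.sqrt n) := by
      rw [Real.rpow_def_of_pos hn0, hqn]; ring_nf
    have e5 : (n:ℝ) ^ (-Real.sqrt n) ≤ (n:ℝ) ^ (-(1:ℝ)) :=
      Real.rpow_le_rpow_of_exponent_le hn1.le (by linarith)
    have e6 : (n:ℝ) ^ (-(1:ℝ)) * n = 1 := by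
      rw [Real.rpow_neg_one]
      exact inv_mul_cancel₀ hn0.ne'
    calc (1 - q) ^ n * n ≤ (n:ℝ) ^ (-(1:ℝ)) * n := by
          refine mul_le_mul_of_nonneg_right ?_ hn0.le
          calc (1 - q) ^ n ≤ Real.exp (-q) ^ n := e2
            _ = (n:ℝ) ^ (-Real.sqrt n) := by rw [e3, e4]
            _ ≤ (n:ℝ) ^ (-(1:ℝ)) := e5
      _ = 1 := e6
  -- bound the second sum by 1
  have hCS2' : ∑ i, (1 - q) * Real.sqrt (xhat i (1 - ε)) ≤ 1 := by
    refine hCS2.trans ?_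
    have h1 : Real.sqrt (1 - q) ≤ 1 := Real.sqrt_le_one.mpr (by linarith)
    have h2 : Real.sqrt ((1 - q) ^ n) * Real.sqrt n = Real.sqrt ((1 - q) ^ n * n) :=
      (Real.sqrt_mul (by positivity) _).symm
    have h3 : Real.sqrt ((1 - q) ^ n * n) ≤ 1 := Real.sqrt_le_one.mpr hpow
    calc Real.sqrt (1 - q) * (Real.sqrt ((1 - q) ^ n) * Real.sqrt n)
        ≤ 1 * (Real.sqrt ((1 - q) ^ n) * Real.sqrt n) := by
          apply mul_le_mul_of_nonneg_right h1 (by positivity)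
      _ = Real.sqrt ((1 - q) ^ n * n) := by rw [one_mul, h2]
      _ ≤ 1 := h3
  -- identify the first bound
  have h4 : Real.sqrt (Real.sqrt n) = (n:ℝ) ^ ((1:ℝ)/4) := by
    rw [Real.sqrt_eq_rpow, Real.sqrt_eq_rpow, ← Real.rpow_mul hn0.le]
    norm_num
  have hCS1' : ∑ i, q * Real.sqrt (xhat i 1)
      ≤ (n:ℝ) ^ ((1:ℝ)/4) * Real.sqrt (Real.log n) := by
    refine hCS1.trans ?_
    rw [Real.sqrt_one, one_mul, ← Real.sqrt_mul hq0.le, hqn, Real.sqrt_mul hLpos.le, h4]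
    ring_nf
    exact le_refl _
  -- numeric endgame
  have hfinal : (n:ℝ) ^ ((1:ℝ)/4) * Real.sqrt (Real.log n) + 1
      ≤ 3 * (n:ℝ) ^ ((1:ℝ)/4) * Real.log n := aux_final n hn
  calc ∑ i, (q * phat i 1 + (1 - q) * phat i (1 - ε))
      ≤ ∑ i, q * Real.sqrt (xhat i 1) + ∑ i, (1 - q) * Real.sqrt (xhat i (1 - ε)) := hstep1
    _ ≤ (n:ℝ) ^ ((1:ℝ)/4) * Real.sqrt (Real.log n) + 1 := add_le_add hCS1' hCS2'
    _ ≤ 3 * (n:ℝ) ^ ((1:ℝ)/4) * Real.log n := hfinal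
end

section
/- In the single-bidder convex payment setting, the posted-price mechanism that offers the good at perceived price equal to the median κ (charging actual payment c^{-1}(κ) upon sale) achieves expected revenue at least half the optimal: APX/OPT ≥ 1/2. -/
/-!
By Jensen's inequality, in the form of a supporting line of `c` at `c⁻¹(κ)` (whose slope
is positive because `c 0 < c (c⁻¹ κ)`), it suffices to show that the expected perceived
payment `E[c(phat)]` is at most `κ`. The perceived payments form a quasi-linear BIC, IIR
mechanism. Along a grid `0 = g₀ ≤ … ≤ gₙ = vbar`, incentive compatibility dominates such a
mechanism by a mixture of posted prices `gᵢ₊₁` with weights `x gᵢ₊₁ - x gᵢ`, up to an error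
on the grid cell containing the type; the error vanishes with the mesh since the density is
bounded. A posted price `r` earns `r (1 - F r) ≤ κ`: if `F r ≤ 1/2` then `r ≤ κ`, and
otherwise this is concavity of the revenue curve `q ↦ v q * q` at the quantiles `1 - F r`,
`1/2` and `1`.
-/

open MeasureTheory Set Real

namespace ConvexOn

variable {S : Set ℝ} {c : ℝ → ℝ} {k a : ℝ}

theorem add_rightDeriv_mul_sub_le (hc : ConvexOn ℝ S c) (hk : k ∈ interior S) (ha : a ∈ S) :
    c k + derivWithin c (Ioi k) k * (a - k) ≤ c a := by
  rcases lt_trichotomy a k with hak | rfl | hka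
  · have h := (hc.slope_le_leftDeriv_of_mem_interior ha hk hak).trans
      (hc.leftDeriv_le_rightDeriv_of_mem_interior hk)
    rw [slope_def_field, div_le_iff₀ (sub_pos.2 hak)] at h
    linarith
  · simp
  · have h := hc.rightDeriv_le_slope_of_mem_interior hk ha hka
    rw [slope_def_field, le_div_iff₀ (sub_pos.2 hka)] at h
    linarith

theorem rightDeriv_pos (hc : ConvexOn ℝ S c) (hk : k ∈ interior S) (ha : a ∈ S) (hak : a < k)
    (hca : c a < c k) : 0 < derivWithin c (Ioi k) k := by
  have h := (hc.slope_le_leftDeriv_of_mem_interior ha hk hak).trans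
    (hc.leftDeriv_le_rightDeriv_of_mem_interior hk)
  rw [slope_def_field] at h
  exact (div_pos (sub_pos.2 hca) (sub_pos.2 hak)).trans_le h

theorem integral_le_of_integral_comp_le {Ω : Type*} [MeasurableSpace Ω]
    (hc : ConvexOn ℝ S c) (hk : k ∈ interior S) (ha : a ∈ S) (hak : a < k) (hca : c a < c k)
    {P : Measure Ω} [IsProbabilityMeasure P] {f : Ω → ℝ} (hfS : ∀ᵐ ω ∂P, f ω ∈ S)
    (hf : Integrable f P) (hcf : Integrable (fun ω => c (f ω)) P) (h : ∫ ω, c (f ω) ∂P ≤ c k) :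
    ∫ ω, f ω ∂P ≤ k := by
  set s := derivWithin c (Ioi k) k
  have hline : c k + s * (∫ ω, f ω ∂P - k) ≤ ∫ ω, c (f ω) ∂P := by
    have hlin : Integrable (fun ω => s * (f ω - k)) P :=
      (hf.sub (integrable_const k)).const_mul s
    calc c k + s * (∫ ω, f ω ∂P - k) = ∫ ω, (c k + s * (f ω - k)) ∂P := by
          rw [integral_add (integrable_const _) hlin, integral_const_mul,
            integral_sub hf (integrable_const _)]
          simp
      _ ≤ ∫ ω, c (f ω) ∂P := integral_mono_ae ((integrable_const _).add hlin) hcf <| by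
          filter_upwards [hfS] with ω hω using hc.add_rightDeriv_mul_sub_le hk hω
  have hs := hc.rightDeriv_pos hk ha hak hca
  nlinarith

end ConvexOn

theorem ConcaveOn.le_two_mul_one_sub_mul_half {R : ℝ → ℝ} (hR : ConcaveOn ℝ (Icc 0 1) R)
    (hR1 : 0 ≤ R 1) {q : ℝ} (hq : q ∈ Icc (0 : ℝ) (1 / 2)) :
    R q ≤ 2 * (1 - q) * R (1 / 2) := by
  have h1q : 0 < 1 - q := by linarith [hq.2]
  set l := 1 / (2 * (1 - q)) with hl
  have hl1 : l ≤ 1 := by rw [hl, div_le_one (by linarith)]; linarith [hq.2]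
  have hmid : l • q + (1 - l) • (1 : ℝ) = 1 / 2 := by
    simp only [smul_eq_mul, hl]; field_simp; ring
  have hconc := hR.2 ⟨hq.1, by linarith [hq.2]⟩ ⟨zero_le_one, le_rfl⟩ (by positivity)
    (sub_nonneg.2 hl1) (add_sub_cancel l 1)
  rw [hmid, smul_eq_mul, smul_eq_mul] at hconc
  have hlR : l * R q ≤ R (1 / 2) := by nlinarith
  calc R q = 2 * (1 - q) * (l * R q) := by rw [hl]; field_simp
    _ ≤ 2 * (1 - q) * R (1 / 2) := by gcongr

theorem mul_one_sub_le_of_concaveOn {vbar κ : ℝ} {F v : ℝ → ℝ}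
    (hF : StrictMonoOn F (Icc 0 vbar)) (hF0 : F 0 = 0) (hF1 : F vbar = 1)
    (hinv : ∀ q ∈ Icc (0 : ℝ) 1, v q ∈ Icc 0 vbar ∧ F (v q) = 1 - q)
    (hreg : ConcaveOn ℝ (Icc (0 : ℝ) 1) (fun q => v q * q)) (hκ : κ ∈ Icc 0 vbar)
    (hFκ : F κ = 1 / 2) {r : ℝ} (hr : r ∈ Icc 0 vbar) :
    r * (1 - F r) ≤ κ := by
  have h0 : (0 : ℝ) ∈ Icc 0 vbar := ⟨le_rfl, hr.1.trans hr.2⟩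
  have hFr0 : 0 ≤ F r := hF0 ▸ hF.monotoneOn h0 hr hr.1
  have hFr1 : F r ≤ 1 := hF1 ▸ hF.monotoneOn hr ⟨h0.2, le_rfl⟩ hr.2
  rcases le_or_gt (F r) (1 / 2) with hle | hlt
  · have hrκ : r ≤ κ := (hF.le_iff_le hr hκ).1 (hFκ ▸ hle)
    nlinarith [hr.1]
  set q := 1 - F r with hq
  have hqI : q ∈ Icc (0 : ℝ) 1 := ⟨by linarith, by linarith⟩
  have hvq : v q = r := hF.injOn (hinv q hqI).1 hr (by rw [(hinv q hqI).2, hq]; ring)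
  have hhalf : (1 / 2 : ℝ) ∈ Icc 0 1 := ⟨by norm_num, by norm_num⟩
  have hvhalf : v (1 / 2) = κ :=
    hF.injOn (hinv _ hhalf).1 hκ (by rw [(hinv _ hhalf).2, hFκ]; norm_num)
  have h := hreg.le_two_mul_one_sub_mul_half
    (by simpa using (hinv 1 ⟨zero_le_one, le_rfl⟩).1.1) (q := q) ⟨hqI.1, by linarith⟩
  simp only [hvq, hvhalf] at h
  nlinarith [hκ.1]

theorem strictMonoOn_of_eq_integral {f F : ℝ → ℝ} {a b : ℝ} (hf : ContinuousOn f (Icc a b))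
    (hpos : ∀ t ∈ Icc a b, 0 < f t) (hF : ∀ t ∈ Icc a b, F t = ∫ s in a..t, f s) :
    StrictMonoOn F (Icc a b) := by
  intro s hs t ht hst
  have hint : ∀ u ∈ Icc a b, ∀ v ∈ Icc a b, IntervalIntegrable f volume u v :=
    fun u hu v hv => (hf.mono (uIcc_subset_Icc hu hv)).intervalIntegrable
  have ha : a ∈ Icc a b := ⟨le_rfl, hs.1.trans hs.2⟩
  rw [hF s hs, hF t ht, ← sub_pos,
    intervalIntegral.integral_interval_sub_left (hint a ha t ht) (hint a ha s hs)]
  exact intervalIntegral.intervalIntegral_pos_of_pos_on (hint s hs t ht)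
    (fun u hu => hpos u ⟨hs.1.trans hu.1.le, hu.2.le.trans ht.2⟩) hst

theorem withDensity_ofReal_Ici {f : ℝ → ℝ} {a b r : ℝ} (hf : IntegrableOn f (Icc a b))
    (hf0 : ∀ t ∈ Icc a b, 0 ≤ f t) (hr : r ∈ Icc a b) :
    (volume.restrict (Icc a b)).withDensity (fun t => ENNReal.ofReal (f t)) (Ici r) =
      ENNReal.ofReal (∫ t in r..b, f t) := by
  have hsub : Icc r b ⊆ Icc a b := Icc_subset_Icc_left hr.1
  have hinter : Ici r ∩ Icc a b = Icc r b := by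
    ext t
    simp only [mem_inter_iff, mem_Ici, mem_Icc]
    exact ⟨fun h => ⟨h.1, h.2.2⟩, fun h => ⟨h.1, hr.1.trans h.1, h.2⟩⟩
  rw [withDensity_apply _ measurableSet_Ici, Measure.restrict_restrict measurableSet_Ici,
    hinter, intervalIntegral.integral_of_le hr.2,
    ← integral_Icc_eq_integral_Ioc, ofReal_integral_eq_lintegral_ofReal (hf.mono_set hsub)]
  filter_upwards [ae_restrict_mem measurableSet_Icc] with t ht using hf0 t (hsub ht)

theorem measureReal_withDensity_ofReal_le {f : ℝ → ℝ} {A s : Set ℝ} {C : ℝ}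
    (hA : MeasurableSet A) (hC : 0 ≤ C) (hfC : ∀ t ∈ A, f t ≤ C) (hs : volume s ≠ ⊤) :
    ((volume.restrict A).withDensity fun t => ENNReal.ofReal (f t)).real s ≤
      C * volume.real s := by
  have hle : (volume.restrict A).withDensity (fun t => ENNReal.ofReal (f t)) s ≤
      ENNReal.ofReal C * volume s := by
    have hdens :
        (fun t => ENNReal.ofReal (f t)) ≤ᵐ[volume.restrict A] fun _ => ENNReal.ofReal C := by
      filter_upwards [ae_restrict_mem hA] with t ht using ENNReal.ofReal_le_ofReal (hfC t ht)
    calc _ ≤ (volume.restrict A).withDensity (fun _ => ENNReal.ofReal C) s :=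
          withDensity_mono hdens s
      _ ≤ ENNReal.ofReal C * volume s := by
          rw [withDensity_const, Measure.smul_apply, smul_eq_mul]
          exact mul_le_mul_right (Measure.restrict_apply_le A s) _
  rw [measureReal_def, measureReal_def, ← ENNReal.toReal_ofReal hC, ← ENNReal.toReal_mul]
  exact ENNReal.toReal_mono (ENNReal.mul_ne_top ENNReal.ofReal_ne_top hs) hle

theorem measureReal_withDensity_Ici {f F : ℝ → ℝ} {a b r : ℝ} (hf : ContinuousOn f (Icc a b))
    (hf0 : ∀ t ∈ Icc a b, 0 ≤ f t) (hF : ∀ t ∈ Icc a b, F t = ∫ s in a..t, f s)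
    (hr : r ∈ Icc a b) :
    ((volume.restrict (Icc a b)).withDensity fun t => ENNReal.ofReal (f t)).real (Ici r) =
      F b - F r := by
  have hb : b ∈ Icc a b := ⟨hr.1.trans hr.2, le_rfl⟩
  have hfI : ∀ s ∈ Icc a b, IntervalIntegrable f volume a s := fun s hs =>
    (hf.mono (uIcc_subset_Icc ⟨le_rfl, hb.1⟩ hs)).intervalIntegrable
  have htail : 0 ≤ ∫ t in r..b, f t :=
    intervalIntegral.integral_nonneg hr.2 fun t ht => hf0 t ⟨hr.1.trans ht.1, ht.2⟩
  rw [measureReal_def, withDensity_ofReal_Ici hf.integrableOn_Icc hf0 hr,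
    ENNReal.toReal_ofReal htail, hF b hb, hF r hr,
    intervalIntegral.integral_interval_sub_left (hfI b hb) (hfI r hr)]

theorem exists_measureReal_withDensity_Ico_le {f : ℝ → ℝ} {a b : ℝ}
    (hf : ContinuousOn f (Icc a b)) :
    ∃ C, 0 ≤ C ∧ ∀ u v, u ≤ v →
      ((volume.restrict (Icc a b)).withDensity fun t => ENNReal.ofReal (f t)).real (Ico u v) ≤
        C * (v - u) := by
  obtain ⟨C, hC⟩ := isCompact_Icc.exists_bound_of_continuousOn hf
  refine ⟨max C 0, le_max_right _ _, fun u v huv => ?_⟩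
  rw [← volume_real_Ico_of_le huv]
  exact measureReal_withDensity_ofReal_le measurableSet_Icc (le_max_right _ _)
    (fun t ht => ((le_abs_self _).trans (hC t ht)).trans (le_max_left _ _))
    measure_Ico_lt_top.ne

theorem MonotoneOn.min_mul_sub_le_indicator {vbar : ℝ} {x : ℝ → ℝ}
    (hx : MonotoneOn x (Icc 0 vbar)) {a b t : ℝ} (ha : a ∈ Icc 0 vbar) (hb : b ∈ Icc 0 vbar)
    (hab : a ≤ b) (ht : t ∈ Icc 0 vbar) :
    min t b * (x (min t b) - x (min t a)) ≤
      (Ici b).indicator (fun _ => b * (x b - x a)) t +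
        (Ico a b).indicator (fun _ => vbar * (x b - x a)) t := by
  rcases le_or_gt b t with hbt | htb
  · have hat : a ≤ t := hab.trans hbt
    simp [hbt, hat, not_lt.2 hbt]
  rcases le_or_gt a t with hat | hta
  · simp only [min_eq_left htb.le, min_eq_right hat, indicator_of_notMem (notMem_Ici.2 htb),
      indicator_of_mem (show t ∈ Ico a b from ⟨hat, htb⟩), zero_add]
    exact mul_le_mul ht.2 (by linarith [hx ht hb htb.le]) (sub_nonneg.2 (hx ha ht hat))
      (ht.1.trans ht.2)
  · simp [min_eq_left htb.le, min_eq_left hta.le, not_le.2 (hta.trans_le hab), not_le.2 hta]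

/-- Quasi-linear incentive compatibility: `t * x w - p w` is the utility of type `t` reporting `w`,
where `p` is the payment as perceived by the bidder (`c ∘ phat` in the theorem). -/
def IsIncentiveCompatible (I : Set ℝ) (x p : ℝ → ℝ) : Prop :=
  ∀ t ∈ I, ∀ w ∈ I, t * x w - p w ≤ t * x t - p t

def IsIndividuallyRational (I : Set ℝ) (x p : ℝ → ℝ) : Prop :=
  ∀ t ∈ I, 0 ≤ t * x t - p t

namespace IsIncentiveCompatible

variable {I : Set ℝ} {vbar : ℝ} {x p : ℝ → ℝ}

theorem payment_sub_le (h : IsIncentiveCompatible I x p) {t w : ℝ} (ht : t ∈ I) (hw : w ∈ I) :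
    p t - p w ≤ t * (x t - x w) := by
  linarith [h t ht w hw]

theorem monotoneOn_allocation (h : IsIncentiveCompatible I x p) : MonotoneOn x I := by
  intro w hw t ht hwt
  rcases hwt.eq_or_lt with rfl | hlt
  · rfl
  have hprod : 0 ≤ (t - w) * (x t - x w) := by
    linarith [h.payment_sub_le ht hw, h.payment_sub_le hw ht]
  exact sub_nonneg.1 (nonneg_of_mul_nonneg_right hprod (sub_pos.2 hlt))

theorem monotoneOn_payment (h : IsIncentiveCompatible I x p) (hI : I ⊆ Ici 0) :
    MonotoneOn p I := by
  intro w hw t ht hwt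
  have hx : 0 ≤ w * (x t - x w) :=
    mul_nonneg (hI hw) (sub_nonneg.2 (h.monotoneOn_allocation hw ht hwt))
  linarith [h.payment_sub_le hw ht]

theorem integrable_payment (h : IsIncentiveCompatible (Icc 0 vbar) x p)
    (P : Measure ℝ) [IsFiniteMeasure P] (hP : ∀ᵐ t ∂P, t ∈ Icc 0 vbar) : Integrable p P := by
  rw [← Measure.restrict_eq_self_of_ae_mem hP]
  exact (h.monotoneOn_payment fun _ ht => ht.1).integrableOn_isCompact isCompact_Icc

theorem payment_le_sum_min (h : IsIncentiveCompatible (Icc 0 vbar) x p)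
    (hIR : IsIndividuallyRational (Icc 0 vbar) x p) {g : ℕ → ℝ} {n : ℕ}
    (hg : ∀ i ≤ n, g i ∈ Icc 0 vbar) (hg0 : g 0 = 0) (hgn : g n = vbar) {t : ℝ}
    (ht : t ∈ Icc 0 vbar) :
    p t ≤ ∑ i ∈ Finset.range n,
      min t (g (i + 1)) * (x (min t (g (i + 1))) - x (min t (g i))) := by
  have hmin : ∀ i ≤ n, min t (g i) ∈ Icc 0 vbar := fun i hi =>
    ⟨le_min ht.1 (hg i hi).1, (min_le_left _ _).trans ht.2⟩
  have hp0 : p (min t (g 0)) ≤ 0 := by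
    simpa [hg0, ht.1] using hIR 0 ⟨le_rfl, ht.1.trans ht.2⟩
  calc p t = p (min t (g 0)) + ∑ i ∈ Finset.range n,
        (p (min t (g (i + 1))) - p (min t (g i))) := by
        rw [Finset.sum_range_sub (fun i => p (min t (g i))), hgn, min_eq_left ht.2]; ring
    _ ≤ 0 + ∑ i ∈ Finset.range n,
        min t (g (i + 1)) * (x (min t (g (i + 1))) - x (min t (g i))) := by
        gcongr with i hi
        have hi := Finset.mem_range.1 hi
        exact h.payment_sub_le (hmin _ hi) (hmin _ hi.le)
    _ = _ := zero_add _

theorem integral_le_add_of_grid (h : IsIncentiveCompatible (Icc 0 vbar) x p)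
    (hIR : IsIndividuallyRational (Icc 0 vbar) x p) (hx : ∀ t ∈ Icc 0 vbar, x t ∈ Icc 0 1)
    (P : Measure ℝ) [IsFiniteMeasure P] (hP : ∀ᵐ t ∂P, t ∈ Icc 0 vbar) {κ ε : ℝ}
    (hposted : ∀ r ∈ Icc 0 vbar, r * P.real (Ici r) ≤ κ) (hε : 0 ≤ ε)
    {g : ℕ → ℝ} {n : ℕ} (hg : Monotone g) (hg0 : g 0 = 0) (hgn : g n = vbar)
    (hcell : ∀ i < n, P.real (Ico (g i) (g (i + 1))) ≤ ε) :
    ∫ t, p t ∂P ≤ κ + vbar * ε := by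
  have hgI : ∀ i ≤ n, g i ∈ Icc 0 vbar := fun i hi =>
    ⟨hg0 ▸ hg (Nat.zero_le i), hgn ▸ hg hi⟩
  have hxmono := h.monotoneOn_allocation
  set Δ : ℕ → ℝ := fun i => x (g (i + 1)) - x (g i)
  have hΔ_nonneg : ∀ i < n, 0 ≤ Δ i := fun i hi =>
    sub_nonneg.2 (hxmono (hgI i hi.le) (hgI (i + 1) hi) (hg i.le_succ))
  have hκ : 0 ≤ κ := by simpa using hposted 0 (hg0 ▸ hgI 0 n.zero_le)
  have hvbar : 0 ≤ vbar := hgn ▸ hg0 ▸ hg n.zero_le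
  set φ : ℕ → ℝ → ℝ := fun i t => (Ici (g (i + 1))).indicator (fun _ => g (i + 1) * Δ i) t +
    (Ico (g i) (g (i + 1))).indicator (fun _ => vbar * Δ i) t
  have hcells : ∀ i, Integrable (φ i) P := fun i =>
    ((integrable_const _).indicator measurableSet_Ici).add
      ((integrable_const _).indicator measurableSet_Ico)
  calc ∫ t, p t ∂P ≤ ∫ t, ∑ i ∈ Finset.range n, φ i t ∂P := by
        refine integral_mono_ae (h.integrable_payment P hP)
          (integrable_finsetSum _ fun i _ => hcells i) ?_
        filter_upwards [hP] with t ht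
        refine (h.payment_le_sum_min hIR hgI hg0 hgn ht).trans (Finset.sum_le_sum fun i hi => ?_)
        have hi := Finset.mem_range.1 hi
        exact hxmono.min_mul_sub_le_indicator (hgI i hi.le) (hgI (i + 1) hi) (hg i.le_succ) ht
    _ = ∑ i ∈ Finset.range n, (g (i + 1) * P.real (Ici (g (i + 1))) * Δ i +
          vbar * P.real (Ico (g i) (g (i + 1))) * Δ i) := by
        rw [integral_finsetSum _ fun i _ => hcells i]
        refine Finset.sum_congr rfl fun i _ => ?_
        rw [integral_add ((integrable_const _).indicator measurableSet_Ici)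
            ((integrable_const _).indicator measurableSet_Ico),
          integral_indicator_const _ measurableSet_Ici,
          integral_indicator_const _ measurableSet_Ico, smul_eq_mul, smul_eq_mul]
        ring
    _ ≤ ∑ i ∈ Finset.range n, (κ + vbar * ε) * Δ i := by
        refine Finset.sum_le_sum fun i hi => ?_
        have hi := Finset.mem_range.1 hi
        rw [add_mul]
        gcongr
        · exact hΔ_nonneg i hi
        · exact hposted _ (hgI (i + 1) hi)
        · exact hΔ_nonneg i hi
        · exact hcell i hi
    _ = (κ + vbar * ε) * (x vbar - x 0) := by
        rw [← Finset.mul_sum, Finset.sum_range_sub (fun i => x (g i)), hgn, hg0]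
    _ ≤ κ + vbar * ε := by
        have h0 := hx 0 ⟨le_rfl, hvbar⟩
        have hv := hx vbar ⟨hvbar, le_rfl⟩
        nlinarith [h0.1, hv.2, mul_nonneg hvbar hε]

open Filter Topology in
theorem integral_le_of_postedPrice_le (h : IsIncentiveCompatible (Icc 0 vbar) x p)
    (hIR : IsIndividuallyRational (Icc 0 vbar) x p) (hx : ∀ t ∈ Icc 0 vbar, x t ∈ Icc 0 1)
    (hvbar : 0 ≤ vbar) (P : Measure ℝ) [IsFiniteMeasure P] (hP : ∀ᵐ t ∂P, t ∈ Icc 0 vbar)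
    {κ C : ℝ} (hposted : ∀ r ∈ Icc 0 vbar, r * P.real (Ici r) ≤ κ) (hC : 0 ≤ C)
    (hcell : ∀ a b, a ≤ b → P.real (Ico a b) ≤ C * (b - a)) :
    ∫ t, p t ∂P ≤ κ := by
  have hgrid : ∀ n : ℕ, 0 < n → ∫ t, p t ∂P ≤ κ + vbar * (C * (vbar / n)) := by
    intro n hn
    refine h.integral_le_add_of_grid hIR hx P hP hposted (by positivity)
      (g := fun i => i * (vbar / n)) (n := n)
      (fun i j hij => mul_le_mul_of_nonneg_right (Nat.cast_le.2 hij) (by positivity))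
      (by simp) (by field_simp) fun i _ => ?_
    calc P.real (Ico (i * (vbar / n)) ((i + 1 : ℕ) * (vbar / n)))
        ≤ C * ((i + 1 : ℕ) * (vbar / n) - i * (vbar / n)) :=
          hcell _ _ (mul_le_mul_of_nonneg_right (Nat.cast_le.2 i.le_succ) (by positivity))
      _ = C * (vbar / n) := by push_cast; ring
  have hlim : Tendsto (fun n : ℕ => κ + vbar * (C * (vbar / n))) atTop (𝓝 κ) := by
    simpa using tendsto_const_nhds.add (tendsto_const_nhds.mul
      (tendsto_const_nhds.mul (tendsto_const_div_atTop_nhds_zero_nat vbar)))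
  exact ge_of_tendsto hlim (eventually_atTop.2 ⟨1, hgrid⟩)

end IsIncentiveCompatible

theorem stmt_19_general (vbar : ℝ)
    (f F : ℝ → ℝ)
    (hf_cont : ContinuousOn f (Icc 0 vbar))
    (hf_pos : ∀ t ∈ Icc 0 vbar, 0 < f t)
    (hF : ∀ t ∈ Icc 0 vbar, F t = ∫ s in (0:ℝ)..t, f s)
    (hF1 : F vbar = 1)
    -- regularity: the revenue curve q ↦ v(q) q is concave, v the inverse quantile
    (v : ℝ → ℝ) (hinv : ∀ q ∈ Icc (0:ℝ) 1, v q ∈ Icc 0 vbar ∧ F (v q) = 1 - q)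
    (hreg : ConcaveOn ℝ (Icc (0:ℝ) 1) (fun q => v q * q))
    (κ : ℝ) (hκmem : κ ∈ Icc 0 vbar) (hκ : F κ = 1/2)
    (c : ℝ → ℝ) (hconv : ConvexOn ℝ (Ici 0) c)
    (hc0 : c 0 = 0)
    (cinvκ : ℝ) (hcinv_nonneg : 0 ≤ cinvκ) (hcinv : c cinvκ = κ)
    (P : Measure ℝ)
    (hP : P = (volume.restrict (Icc 0 vbar)).withDensity (fun t => ENNReal.ofReal (f t)))
    (hPprob : IsProbabilityMeasure P)
    -- an arbitrary BIC, IIR single-bidder mechanism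
    (xhat phat : ℝ → ℝ)
    (hx01 : ∀ t ∈ Icc (0:ℝ) vbar, xhat t ∈ Icc (0:ℝ) 1)
    (hp_nonneg : ∀ t ∈ Icc (0:ℝ) vbar, 0 ≤ phat t)
    (hBIC : ∀ t ∈ Icc (0:ℝ) vbar, ∀ w ∈ Icc (0:ℝ) vbar,
      t * xhat t - c (phat t) ≥ t * xhat w - c (phat w))
    (hIIR : ∀ t ∈ Icc (0:ℝ) vbar, 0 ≤ t * xhat t - c (phat t)) :
    ∫ t, phat t ∂P ≤ 2 * ((1 - F κ) * cinvκ) := by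
  have hvbar : 0 ≤ vbar := hκmem.1.trans hκmem.2
  have h0 : (0 : ℝ) ∈ Icc 0 vbar := ⟨le_rfl, hvbar⟩
  have hF0 : F 0 = 0 := by rw [hF 0 h0, intervalIntegral.integral_same]
  have hFmono := strictMonoOn_of_eq_integral hf_cont hf_pos hF
  have hκpos : 0 < κ := hκmem.1.lt_of_ne (by rintro rfl; norm_num [hF0] at hκ)
  have hPI : ∀ᵐ t ∂P, t ∈ Icc 0 vbar :=
    hP ▸ (withDensity_absolutelyContinuous _ _).ae_le (ae_restrict_mem measurableSet_Icc)
  have hposted : ∀ r ∈ Icc 0 vbar, r * P.real (Ici r) ≤ κ := fun r hr => by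
    rw [hP, measureReal_withDensity_Ici hf_cont (fun t ht => (hf_pos t ht).le) hF hr, hF1]
    exact mul_one_sub_le_of_concaveOn hFmono hF0 hF1 hinv hreg hκmem hκ hr
  obtain ⟨C, hC, hcell⟩ := exists_measureReal_withDensity_Ico_le hf_cont
  have hrev : ∫ t, c (phat t) ∂P ≤ κ :=
    IsIncentiveCompatible.integral_le_of_postedPrice_le (p := fun t => c (phat t)) hBIC hIIR hx01
      hvbar P hPI hposted hC (hP ▸ hcell)
  have hcinv_pos : 0 < cinvκ := hcinv_nonneg.lt_of_ne (by rintro rfl; linarith [hc0 ▸ hcinv])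
  rw [hκ, show 2 * ((1 - 1 / 2) * cinvκ) = cinvκ by ring]
  by_cases hint : Integrable phat P
  · exact hconv.integral_le_of_integral_comp_le (by rwa [interior_Ici]) self_mem_Ici hcinv_pos
      (by rw [hc0, hcinv]; exact hκpos) (hPI.mono hp_nonneg) hint
      (IsIncentiveCompatible.integrable_payment (p := fun t => c (phat t)) hBIC P hPI)
      (hcinv ▸ hrev)
  · rw [integral_undef hint]
    exact hcinv_nonneg

/-- Single bidder, value drawn from a regular distribution with median `κ`
(`F κ = 1/2`), strictly increasing convex payment function `c`.  The posted-price
mechanism that offers the good at perceived price `κ` (charging the actual payment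
`c⁻¹(κ)` upon sale) has revenue `APX = (1 - F κ) · c⁻¹(κ)`, and every BIC, IIR
mechanism has expected revenue at most `2 · APX`, i.e. `APX/OPT ≥ 1/2`. -/
theorem stmt_19 (vbar : ℝ) (hvbar : 0 < vbar)
    (f F : ℝ → ℝ)
    (hf_cont : ContinuousOn f (Icc 0 vbar))
    (hf_pos : ∀ t ∈ Icc 0 vbar, 0 < f t)
    (hF : ∀ t ∈ Icc 0 vbar, F t = ∫ s in (0:ℝ)..t, f s)
    (hF1 : F vbar = 1)
    -- regularity: the revenue curve q ↦ v(q) q is concave, v the inverse quantile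
    (v : ℝ → ℝ) (hinv : ∀ q ∈ Icc (0:ℝ) 1, v q ∈ Icc 0 vbar ∧ F (v q) = 1 - q)
    (hreg : ConcaveOn ℝ (Icc (0:ℝ) 1) (fun q => v q * q))
    (κ : ℝ) (hκmem : κ ∈ Icc 0 vbar) (hκ : F κ = 1/2)
    (c : ℝ → ℝ) (hconv : ConvexOn ℝ (Ici 0) c)
    (hmono : StrictMonoOn c (Ici 0)) (hc0 : c 0 = 0)
    (cinvκ : ℝ) (hcinv_nonneg : 0 ≤ cinvκ) (hcinv : c cinvκ = κ)
    (P : Measure ℝ)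
    (hP : P = (volume.restrict (Icc 0 vbar)).withDensity (fun t => ENNReal.ofReal (f t)))
    (hPprob : IsProbabilityMeasure P)
    -- an arbitrary BIC, IIR single-bidder mechanism
    (xhat phat : ℝ → ℝ)
    (hx01 : ∀ t ∈ Icc (0:ℝ) vbar, xhat t ∈ Icc (0:ℝ) 1)
    (hp_nonneg : ∀ t ∈ Icc (0:ℝ) vbar, 0 ≤ phat t)
    (hBIC : ∀ t ∈ Icc (0:ℝ) vbar, ∀ w ∈ Icc (0:ℝ) vbar,
      t * xhat t - c (phat t) ≥ t * xhat w - c (phat w))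
    (hIIR : ∀ t ∈ Icc (0:ℝ) vbar, 0 ≤ t * xhat t - c (phat t)) :
    ∫ t, phat t ∂P ≤ 2 * ((1 - F κ) * cinvκ) :=
  stmt_19_general vbar f F hf_cont hf_pos hF hF1 v hinv hreg κ hκmem hκ c hconv hc0 cinvκ
    hcinv_nonneg hcinv P hP hPprob xhat phat hx01 hp_nonneg hBIC hIIR
end
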